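/- arXiv:2006.07215 — 7 statements merged into one kernel-verified Lean document; each statement's English description precedes it below -/
import Mathlib

section
/- Let d ≥ 1 be an integer and ν ∈ (0,1]. Let a be a real d×d matrix with tr a > 0 satisfying the Cordes condition |a|² ≤ (tr a)²/(d−1+ν), and set γ := tr a/|a|². Then for every real d×d matrix M one has |γ·(a:M) − tr M| ≤ √(1−ν)·|M|. -/
/-!
Writing `γ := tr a / |a|²`, the left-hand side is the Frobenius pairing `(γ a - I) : M`, so by
Cauchy–Schwarz it suffices to bound `|γ a - I|`. This `γ` minimises `c ↦ |c a - I|`, and expanding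
the square gives `|γ a - I|² = γ² |a|² - 2 γ tr a + d = d - (tr a)² / |a|²`. The Cordes condition
says exactly that `(tr a)² / |a|² ≥ d - 1 + ν`, whence `|γ a - I|² ≤ 1 - ν`.
-/

open Finset Matrix

namespace Matrix

variable {m n : Type*} [Fintype m] [Fintype n]

theorem sum_sum_sq_pos_of_ne_zero {a : Matrix m n ℝ} (ha : a ≠ 0) :
    0 < ∑ i, ∑ j, a i j ^ 2 := by
  obtain ⟨i, j, hij⟩ : ∃ i j, a i j ≠ 0 := by
    by_contra! h
    exact ha (Matrix.ext h)
  refine sum_pos' (fun i _ => sum_nonneg fun j _ => sq_nonneg _) ⟨i, mem_univ i, ?_⟩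
  exact sum_pos' (fun j _ => sq_nonneg _) ⟨j, mem_univ j, by positivity⟩

theorem abs_sum_sum_mul_le_sqrt_mul_sqrt (A B : Matrix m n ℝ) :
    |∑ i, ∑ j, A i j * B i j| ≤ √(∑ i, ∑ j, A i j ^ 2) * √(∑ i, ∑ j, B i j ^ 2) := by
  simp only [← Fintype.sum_prod_type']
  rw [abs_le]
  constructor
  · have h := Real.sum_mul_le_sqrt_mul_sqrt univ (fun p : m × n => -A p.1 p.2) (fun p => B p.1 p.2)
    simp only [neg_mul, sum_neg_distrib, neg_sq] at h
    linarith
  · exact Real.sum_mul_le_sqrt_mul_sqrt univ _ _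

variable [DecidableEq n]

theorem mul_sum_sum_mul_sub_trace (c : ℝ) (a M : Matrix n n ℝ) :
    c * ∑ i, ∑ j, a i j * M i j - trace M = ∑ i, ∑ j, (c • a - 1) i j * M i j := by
  simp only [sub_apply, smul_apply, one_apply, smul_eq_mul, sub_mul, sum_sub_distrib, mul_sum,
    mul_assoc, ite_mul, one_mul, zero_mul, sum_ite_eq, mem_univ, if_true, trace, diag]

theorem sum_sum_sq_smul_sub_one (c : ℝ) (a : Matrix n n ℝ) :
    ∑ i, ∑ j, (c • a - 1) i j ^ 2
      = c ^ 2 * ∑ i, ∑ j, a i j ^ 2 - 2 * c * trace a + Fintype.card n := by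
  have hsq : ∀ i j, (c • a - 1) i j ^ 2
      = c ^ 2 * a i j ^ 2 - 2 * c * (if i = j then a i j else 0) + (if i = j then 1 else 0) := by
    intro i j
    by_cases h : i = j <;> simp [h] <;> ring
  simp only [hsq, sum_add_distrib, sum_sub_distrib, ← mul_sum, sum_ite_eq, mem_univ, if_true,
    trace, diag, sum_const, card_univ, nsmul_eq_mul, mul_one]

theorem sum_sum_sq_smul_sub_one_le_of_cordes {a : Matrix n n ℝ} {ν : ℝ}
    (hS : 0 < ∑ i, ∑ j, a i j ^ 2)
    (hcordes : (Fintype.card n - 1 + ν) * ∑ i, ∑ j, a i j ^ 2 ≤ trace a ^ 2) :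
    ∑ i, ∑ j, ((trace a / ∑ i, ∑ j, a i j ^ 2) • a - 1) i j ^ 2 ≤ 1 - ν := by
  set S := ∑ i, ∑ j, a i j ^ 2
  have hratio : Fintype.card n - 1 + ν ≤ trace a ^ 2 / S := (le_div_iff₀ hS).2 hcordes
  rw [sum_sum_sq_smul_sub_one]
  have hval : (trace a / S) ^ 2 * S - 2 * (trace a / S) * trace a = -(trace a ^ 2 / S) := by
    field_simp
    ring
  linarith

end Matrix

theorem cordes_pointwise_estimate_general (d : ℕ) (hd : 1 ≤ d) (ν : ℝ) (hν0 : 0 < ν)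
    (a : Matrix (Fin d) (Fin d) ℝ)
    (htr : 0 < Matrix.trace a)
    (hcordes : (∑ i, ∑ j, (a i j) ^ 2) ≤ (Matrix.trace a) ^ 2 / ((d : ℝ) - 1 + ν)) :
    ∀ M : Matrix (Fin d) (Fin d) ℝ,
      |(Matrix.trace a / (∑ i, ∑ j, (a i j) ^ 2)) * (∑ i, ∑ j, a i j * M i j)
          - Matrix.trace M|
        ≤ Real.sqrt (1 - ν) * Real.sqrt (∑ i, ∑ j, (M i j) ^ 2) := by
  intro M
  have hS : 0 < ∑ i, ∑ j, a i j ^ 2 :=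
    sum_sum_sq_pos_of_ne_zero fun h => htr.ne' (by simp [h])
  have hdν : (0 : ℝ) < d - 1 + ν := by
    have : (1 : ℝ) ≤ d := by exact_mod_cast hd
    linarith
  have hbound := sum_sum_sq_smul_sub_one_le_of_cordes hS
    (by simpa only [Fintype.card_fin] using (le_div_iff₀' hdν).1 hcordes)
  rw [mul_sum_sum_mul_sub_trace]
  exact (abs_sum_sum_mul_le_sqrt_mul_sqrt _ M).trans (by gcongr)

/-- **Pointwise Cordes estimate.** Let `d ≥ 1`, `ν ∈ (0,1]`, and let `a` be a real `d × d`
matrix with positive trace satisfying the Cordes condition `|a|² ≤ (tr a)²/(d−1+ν)`, where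
`|·|` is the Frobenius norm. With `γ := tr a / |a|²`, for every real `d × d` matrix `M` one
has `|γ·(a:M) − tr M| ≤ √(1−ν)·|M|`, where `a:M` is the Frobenius inner product. -/
theorem cordes_pointwise_estimate (d : ℕ) (hd : 1 ≤ d) (ν : ℝ) (hν0 : 0 < ν) (hν1 : ν ≤ 1)
    (a : Matrix (Fin d) (Fin d) ℝ)
    (htr : 0 < Matrix.trace a)
    (hcordes : (∑ i, ∑ j, (a i j) ^ 2) ≤ (Matrix.trace a) ^ 2 / ((d : ℝ) - 1 + ν)) :
    ∀ M : Matrix (Fin d) (Fin d) ℝ,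
      |(Matrix.trace a / (∑ i, ∑ j, (a i j) ^ 2)) * (∑ i, ∑ j, a i j * M i j)
          - Matrix.trace M|
        ≤ Real.sqrt (1 - ν) * Real.sqrt (∑ i, ∑ j, (M i j) ^ 2) :=
  cordes_pointwise_estimate_general d hd ν hν0 a htr hcordes
end

section
/- Let d ≥ 1 be an integer, ν ∈ (0,1], and let 𝒜, ℬ be nonempty compact metric spaces. Let a : 𝒜 × ℬ → ℝ^{d×d} and f : 𝒜 × ℬ → ℝ be continuous, and suppose that for every (α,β) the matrix a(α,β) has tr a(α,β) > 0 and satisfies the Cordes condition |a(α,β)|² ≤ (tr a(α,β))²/(d−1+ν). Set γ(α,β) := tr a(α,β)/|a(α,β)|² and, for a real d×d matrix M, define F_γ(M) := inf_{α∈𝒜} sup_{β∈ℬ} [γ(α,β)·(a(α,β):M − f(α,β))]. Then for all real d×d matrices M and N, |F_γ(N) − F_γ(M) − tr(N − M)| ≤ √(1−ν)·|N − M|. -/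
/-!
With `c = tr a / |a|²`, the Cordes condition says exactly that
`|c a - I|² = d - (tr a)² / |a|² ≤ 1 - ν`, so by Cauchy–Schwarz each renormalized map
`M ↦ c (a : M)` differs from the trace by a linear form of norm at most `√(1 - ν)`.
An inf-sup moves by at most the uniform distance between the functions it is applied to;
continuity on the compact parameter spaces keeps every inf and sup finite.
-/

open Finset Set Function Bornology

section Frobenius

variable {m n : Type*} [Fintype m] [Fintype n]

theorem abs_sum_sum_mul_le_sqrt_mul_sqrt (X Y : Matrix m n ℝ) :
    |∑ i, ∑ j, X i j * Y i j| ≤ √(∑ i, ∑ j, X i j ^ 2) * √(∑ i, ∑ j, Y i j ^ 2) := by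
  simp only [← Fintype.sum_prod_type']
  rw [← Real.sqrt_mul (sum_nonneg fun _ _ => sq_nonneg _)]
  exact Real.abs_le_sqrt (sum_mul_sq_le_sq_mul_sq _ _ _)

theorem sum_sum_sq_pos_of_trace_ne_zero (A : Matrix n n ℝ) (h : A.trace ≠ 0) :
    0 < ∑ i, ∑ j, A i j ^ 2 := by
  obtain ⟨i, -, hi⟩ := exists_ne_zero_of_sum_ne_zero h
  calc 0 < A i i ^ 2 := by positivity
    _ ≤ ∑ j, A i j ^ 2 := single_le_sum (fun j _ => sq_nonneg (A i j)) (mem_univ i)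
    _ ≤ ∑ i, ∑ j, A i j ^ 2 :=
      single_le_sum (f := fun i => ∑ j, A i j ^ 2) (fun _ _ => sum_nonneg fun _ _ => sq_nonneg _)
        (mem_univ i)

variable [DecidableEq n]

theorem sum_sum_smul_sub_one_mul (c : ℝ) (A E : Matrix n n ℝ) :
    ∑ i, ∑ j, (c • A - 1) i j * E i j = c * ∑ i, ∑ j, A i j * E i j - E.trace := by
  simp [sub_mul, Matrix.one_apply, mul_sum, Matrix.trace, sum_sub_distrib, mul_assoc]

theorem sum_sum_sq_smul_sub_one (c : ℝ) (A : Matrix n n ℝ) :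
    ∑ i, ∑ j, (c • A - 1) i j ^ 2
      = c ^ 2 * ∑ i, ∑ j, A i j ^ 2 - 2 * c * A.trace + Fintype.card n := by
  simp [sub_sq, Matrix.one_apply, mul_sum, Matrix.trace, sum_sub_distrib, sum_add_distrib, mul_pow,
    ite_pow, mul_assoc]

end Frobenius

section Cordes

variable {n : Type*} [Fintype n] [DecidableEq n] {ν : ℝ}

theorem sum_sum_sq_trace_div_smul_sub_one_le (A : Matrix n n ℝ) (hS : 0 < ∑ i, ∑ j, A i j ^ 2)
    (hν : 0 < (Fintype.card n : ℝ) - 1 + ν)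
    (hcordes : ∑ i, ∑ j, A i j ^ 2 ≤ A.trace ^ 2 / ((Fintype.card n : ℝ) - 1 + ν)) :
    ∑ i, ∑ j, ((A.trace / ∑ i, ∑ j, A i j ^ 2) • A - 1) i j ^ 2 ≤ 1 - ν := by
  set S := ∑ i, ∑ j, A i j ^ 2
  have hcordes' : (Fintype.card n : ℝ) - 1 + ν ≤ A.trace ^ 2 / S := by
    rwa [le_div_iff₀ hS, ← le_div_iff₀' hν]
  calc ∑ i, ∑ j, ((A.trace / S) • A - 1) i j ^ 2 = Fintype.card n - A.trace ^ 2 / S := by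
        rw [sum_sum_sq_smul_sub_one]; field_simp; ring
    _ ≤ 1 - ν := by linarith

theorem abs_trace_div_mul_sub_trace_le (A E : Matrix n n ℝ) (htr : A.trace ≠ 0)
    (hν : 0 < (Fintype.card n : ℝ) - 1 + ν)
    (hcordes : ∑ i, ∑ j, A i j ^ 2 ≤ A.trace ^ 2 / ((Fintype.card n : ℝ) - 1 + ν)) :
    |A.trace / (∑ i, ∑ j, A i j ^ 2) * ∑ i, ∑ j, A i j * E i j - E.trace|
      ≤ √(1 - ν) * √(∑ i, ∑ j, E i j ^ 2) := by
  rw [← sum_sum_smul_sub_one_mul]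
  refine (abs_sum_sum_mul_le_sqrt_mul_sqrt _ _).trans
    (mul_le_mul_of_nonneg_right ?_ (by positivity))
  exact Real.sqrt_le_sqrt (sum_sum_sq_trace_div_smul_sub_one_le A
    (sum_sum_sq_pos_of_trace_ne_zero A htr) hν hcordes)

end Cordes

section InfSup

variable {α β : Type*} {g h : α → β → ℝ}

theorem bddAbove_range_apply_of_isBounded (hg : IsBounded (range (uncurry g))) (a : α) :
    BddAbove (range (g a)) :=
  hg.bddAbove.mono (range_subset_iff.2 fun b => mem_range_self (a, b))

theorem bddBelow_range_iSup_of_isBounded [Nonempty β] (hg : IsBounded (range (uncurry g))) :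
    BddBelow (range fun a => ⨆ b, g a b) := by
  obtain ⟨lo, hlo⟩ := hg.bddBelow
  refine ⟨lo, forall_mem_range.2 fun a => ?_⟩
  obtain ⟨b⟩ := ‹Nonempty β›
  exact (hlo ⟨(a, b), rfl⟩).trans (le_ciSup (bddAbove_range_apply_of_isBounded hg a) b)

variable [Nonempty α] [Nonempty β]

theorem iInf_iSup_le_iInf_iSup_add (hg : IsBounded (range (uncurry g)))
    (hh : IsBounded (range (uncurry h))) {c : ℝ} (hle : ∀ a b, g a b ≤ h a b + c) :
    ⨅ a, ⨆ b, g a b ≤ (⨅ a, ⨆ b, h a b) + c := by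
  rw [← sub_le_iff_le_add]
  refine le_ciInf fun a => sub_le_iff_le_add.2 ?_
  calc ⨅ a, ⨆ b, g a b ≤ ⨆ b, g a b := ciInf_le (bddBelow_range_iSup_of_isBounded hg) a
    _ ≤ (⨆ b, h a b) + c := ciSup_le fun b =>
      (hle a b).trans (add_le_add_left (le_ciSup (bddAbove_range_apply_of_isBounded hh a) b) c)

theorem abs_iInf_iSup_sub_sub_le (hg : IsBounded (range (uncurry g)))
    (hh : IsBounded (range (uncurry h))) {t K : ℝ} (hK : ∀ a b, |g a b - h a b - t| ≤ K) :
    |(⨅ a, ⨆ b, g a b) - (⨅ a, ⨆ b, h a b) - t| ≤ K := by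
  have upper := iInf_iSup_le_iInf_iSup_add hg hh (c := t + K) fun a b => by
    linarith [(abs_le.1 (hK a b)).2]
  have lower := iInf_iSup_le_iInf_iSup_add hh hg (c := K - t) fun a b => by
    linarith [(abs_le.1 (hK a b)).1]
  exact abs_le.2 ⟨by linarith, by linarith⟩

end InfSup

theorem cordes_estimate_isaacs_general (d : ℕ) (hd : 1 ≤ d) (ν : ℝ) (hν0 : 0 < ν)
    {𝒜 ℬ : Type*} [MetricSpace 𝒜] [CompactSpace 𝒜] [Nonempty 𝒜]
    [MetricSpace ℬ] [CompactSpace ℬ] [Nonempty ℬ]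
    (a : 𝒜 → ℬ → Matrix (Fin d) (Fin d) ℝ) (f : 𝒜 → ℬ → ℝ)
    (ha : Continuous fun p : 𝒜 × ℬ => a p.1 p.2)
    (hf : Continuous fun p : 𝒜 × ℬ => f p.1 p.2)
    (htr : ∀ α β, 0 < Matrix.trace (a α β))
    (hcordes : ∀ α β,
      (∑ i, ∑ j, (a α β i j) ^ 2) ≤ (Matrix.trace (a α β)) ^ 2 / ((d : ℝ) - 1 + ν))
    (Fγ : Matrix (Fin d) (Fin d) ℝ → ℝ)
    (hFγ : ∀ M, Fγ M = ⨅ α : 𝒜, ⨆ β : ℬ,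
      (Matrix.trace (a α β) / (∑ i, ∑ j, (a α β i j) ^ 2)) *
        ((∑ i, ∑ j, a α β i j * M i j) - f α β)) :
    ∀ M N : Matrix (Fin d) (Fin d) ℝ,
      |Fγ N - Fγ M - Matrix.trace (N - M)|
        ≤ Real.sqrt (1 - ν) * Real.sqrt (∑ i, ∑ j, ((N - M) i j) ^ 2) := by
  intro M N
  have hν : 0 < (d : ℝ) - 1 + ν := by linarith [show (1 : ℝ) ≤ d by exact_mod_cast hd]
  have hbdd (X : Matrix (Fin d) (Fin d) ℝ) : IsBounded (range (uncurry fun α β =>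
      Matrix.trace (a α β) / (∑ i, ∑ j, (a α β i j) ^ 2) *
        ((∑ i, ∑ j, a α β i j * X i j) - f α β))) := by
    refine (isCompact_range ?_).isBounded
    have hS (p : 𝒜 × ℬ) : ∑ i, ∑ j, (a p.1 p.2 i j) ^ 2 ≠ 0 :=
      (sum_sum_sq_pos_of_trace_ne_zero _ (htr p.1 p.2).ne').ne'
    fun_prop (disch := exact hS _)
  rw [hFγ, hFγ]
  refine abs_iInf_iSup_sub_sub_le (hbdd N) (hbdd M) fun α β => ?_
  convert abs_trace_div_mul_sub_trace_le (a α β) (N - M) (htr α β).ne' (by simpa using hν)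
    (by simpa using hcordes α β) using 2
  simp only [Matrix.sub_apply, mul_sub, sum_sub_distrib]
  ring

/-- **Pointwise Cordes estimate for the renormalized Isaacs operator.**
Let `d ≥ 1`, `ν ∈ (0,1]`, and let `𝒜`, `ℬ` be nonempty compact metric spaces. Let
`a : 𝒜 × ℬ → ℝ^{d×d}` and `f : 𝒜 × ℬ → ℝ` be continuous, with each `a(α,β)` having
positive trace and satisfying the Cordes condition `|a(α,β)|² ≤ (tr a(α,β))²/(d−1+ν)`.
With `γ(α,β) := tr a(α,β)/|a(α,β)|²` and
`F_γ(M) := inf_α sup_β [γ(α,β)·(a(α,β):M − f(α,β))]`, we have for all matrices `M`, `N`: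
`|F_γ(N) − F_γ(M) − tr(N − M)| ≤ √(1−ν)·|N − M|` (Frobenius norm). -/
theorem cordes_estimate_isaacs (d : ℕ) (hd : 1 ≤ d) (ν : ℝ) (hν0 : 0 < ν) (hν1 : ν ≤ 1)
    {𝒜 ℬ : Type*} [MetricSpace 𝒜] [CompactSpace 𝒜] [Nonempty 𝒜]
    [MetricSpace ℬ] [CompactSpace ℬ] [Nonempty ℬ]
    (a : 𝒜 → ℬ → Matrix (Fin d) (Fin d) ℝ) (f : 𝒜 → ℬ → ℝ)
    (ha : Continuous fun p : 𝒜 × ℬ => a p.1 p.2)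
    (hf : Continuous fun p : 𝒜 × ℬ => f p.1 p.2)
    (htr : ∀ α β, 0 < Matrix.trace (a α β))
    (hcordes : ∀ α β,
      (∑ i, ∑ j, (a α β i j) ^ 2) ≤ (Matrix.trace (a α β)) ^ 2 / ((d : ℝ) - 1 + ν))
    (Fγ : Matrix (Fin d) (Fin d) ℝ → ℝ)
    (hFγ : ∀ M, Fγ M = ⨅ α : 𝒜, ⨆ β : ℬ,
      (Matrix.trace (a α β) / (∑ i, ∑ j, (a α β i j) ^ 2)) *
        ((∑ i, ∑ j, a α β i j * M i j) - f α β)) :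
    ∀ M N : Matrix (Fin d) (Fin d) ℝ,
      |Fγ N - Fγ M - Matrix.trace (N - M)|
        ≤ Real.sqrt (1 - ν) * Real.sqrt (∑ i, ∑ j, ((N - M) i j) ^ 2) :=
  cordes_estimate_isaacs_general d hd ν hν0 a f ha hf htr hcordes Fγ hFγ
end

section
/- Let d ≥ 1 be an integer, ν ∈ (0,1], and let 𝒜, ℬ be nonempty compact metric spaces. Let a : 𝒜 × ℬ → ℝ^{d×d} and f : 𝒜 × ℬ → ℝ be continuous, and suppose that for every (α,β) the matrix a(α,β) has tr a(α,β) > 0 and satisfies the Cordes condition |a(α,β)|² ≤ (tr a(α,β))²/(d−1+ν). Set γ(α,β) := tr a(α,β)/|a(α,β)|² and, for a real d×d matrix M, define F_γ(M) := inf_{α∈𝒜} sup_{β∈ℬ} [γ(α,β)·(a(α,β):M − f(α,β))]. Then for all real d×d matrices M and N, |F_γ(N) − F_γ(M)| ≤ (1 + √(d+1))·|N − M|. -/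
/-!
For each fixed `(α, β)` the map `M ↦ γ (a : M - f)` is affine with slope `γ a`, and by
Cauchy–Schwarz (once for `a : X`, once for `tr a = Σ aᵢᵢ`) its Frobenius norm is
`tr a / |a| ≤ √d`. Taking `sup` over `β` and `inf` over `α` preserves a uniform Lipschitz
constant, as long as the families are bounded; boundedness comes from compactness and
continuity, where positivity of the trace keeps `γ` continuous.
-/

open Finset Set Function Bornology

section InfSup

variable {ι κ : Type*} {L : ℝ}

theorem ciSup_le_ciSup_add [Nonempty κ] {u v : κ → ℝ} (hv : BddAbove (range v))
    (h : ∀ k, u k ≤ v k + L) : ⨆ k, u k ≤ (⨆ k, v k) + L :=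
  ciSup_le fun k => (h k).trans ((add_le_add_iff_right L).2 (le_ciSup hv k))

theorem ciInf_le_ciInf_add [Nonempty ι] {s t : ι → ℝ} (hs : BddBelow (range s))
    (h : ∀ i, s i ≤ t i + L) : ⨅ i, s i ≤ (⨅ i, t i) + L :=
  sub_le_iff_le_add.1 <| le_ciInf fun i => sub_le_iff_le_add.2 <| (ciInf_le hs i).trans (h i)

theorem ciInf_ciSup_le_ciInf_ciSup_add [Nonempty ι] [Nonempty κ] {u v : ι → κ → ℝ}
    (hu : BddBelow (range (uncurry u))) (hv : BddAbove (range (uncurry v)))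
    (h : ∀ i k, u i k ≤ v i k + L) : ⨅ i, ⨆ k, u i k ≤ (⨅ i, ⨆ k, v i k) + L := by
  obtain ⟨c, hc⟩ := hu
  obtain ⟨C, hC⟩ := hv
  have hv_le (i k) : v i k ≤ C := hC (mem_range_self (i, k))
  have hv_bdd (i) : BddAbove (range (v i)) := ⟨C, forall_mem_range.2 (hv_le i)⟩
  have hu_bdd (i) : BddAbove (range (u i)) :=
    ⟨C + L, forall_mem_range.2 fun k => (h i k).trans ((add_le_add_iff_right L).2 (hv_le i k))⟩
  have hsup_bdd : BddBelow (range fun i => ⨆ k, u i k) :=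
    ⟨c, forall_mem_range.2 fun i =>
      (hc (mem_range_self (i, Classical.arbitrary κ))).trans (le_ciSup (hu_bdd i) _)⟩
  exact ciInf_le_ciInf_add hsup_bdd fun i => ciSup_le_ciSup_add (hv_bdd i) (h i)

theorem abs_ciInf_ciSup_sub_le [Nonempty ι] [Nonempty κ] {u v : ι → κ → ℝ}
    (hu : IsBounded (range (uncurry u))) (hv : IsBounded (range (uncurry v)))
    (h : ∀ i k, |u i k - v i k| ≤ L) :
    |(⨅ i, ⨆ k, u i k) - ⨅ i, ⨆ k, v i k| ≤ L := by
  rw [isBounded_iff_bddBelow_bddAbove] at hu hv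
  refine abs_sub_le_iff.2 ⟨sub_le_iff_le_add'.2 ?_, sub_le_iff_le_add'.2 ?_⟩
  exacts [ciInf_ciSup_le_ciInf_ciSup_add hu.1 hv.2 fun i k =>
      sub_le_iff_le_add'.1 (abs_sub_le_iff.1 (h i k)).1,
    ciInf_ciSup_le_ciInf_ciSup_add hv.1 hu.2 fun i k =>
      sub_le_iff_le_add'.1 (abs_sub_le_iff.1 (h i k)).2]

end InfSup

section Matrix

variable {n : Type*} [Fintype n]

theorem Matrix.trace_sq_le_card_mul_sum_sum_sq (A : Matrix n n ℝ) :
    A.trace ^ 2 ≤ Fintype.card n * ∑ i, ∑ j, A i j ^ 2 :=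
  calc A.trace ^ 2 ≤ Fintype.card n * ∑ i, A i i ^ 2 := sq_sum_le_card_mul_sum_sq
    _ ≤ Fintype.card n * ∑ i, ∑ j, A i j ^ 2 := by
      gcongr with i
      exact single_le_sum (f := fun j => A i j ^ 2) (fun j _ => sq_nonneg _) (mem_univ i)

theorem Matrix.sum_sum_mul_sq_le {m : Type*} [Fintype m] (A X : Matrix m n ℝ) :
    (∑ i, ∑ j, A i j * X i j) ^ 2 ≤ (∑ i, ∑ j, A i j ^ 2) * ∑ i, ∑ j, X i j ^ 2 := by
  have := sum_mul_sq_le_sq_mul_sq univ (fun p : m × n => A p.1 p.2) (fun p => X p.1 p.2)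
  rwa [Fintype.sum_prod_type' fun i j => A i j * X i j, Fintype.sum_prod_type' fun i j => A i j ^ 2,
    Fintype.sum_prod_type' fun i j => X i j ^ 2] at this

theorem Matrix.abs_trace_div_mul_sum_sum_mul_le (A X : Matrix n n ℝ) :
    |A.trace / (∑ i, ∑ j, A i j ^ 2) * ∑ i, ∑ j, A i j * X i j|
      ≤ √(Fintype.card n) * √(∑ i, ∑ j, X i j ^ 2) := by
  set S := ∑ i, ∑ j, A i j ^ 2
  rcases (show 0 ≤ S by positivity).eq_or_lt with hS | hS
  · rw [← hS, div_zero, zero_mul, abs_zero]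
    positivity
  rw [← Real.sqrt_mul (Nat.cast_nonneg _)]
  apply Real.abs_le_sqrt
  calc (A.trace / S * ∑ i, ∑ j, A i j * X i j) ^ 2
      = A.trace ^ 2 * (∑ i, ∑ j, A i j * X i j) ^ 2 / S ^ 2 := by ring
    _ ≤ (Fintype.card n * S) * (S * ∑ i, ∑ j, X i j ^ 2) / S ^ 2 := by
      gcongr
      · exact A.trace_sq_le_card_mul_sum_sum_sq
      · exact A.sum_sum_mul_sq_le X
    _ = Fintype.card n * ∑ i, ∑ j, X i j ^ 2 := by field_simp

theorem Matrix.sum_sum_sq_ne_zero_of_trace_ne_zero {A : Matrix n n ℝ} (h : A.trace ≠ 0) :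
    ∑ i, ∑ j, A i j ^ 2 ≠ 0 := by
  intro hS
  have := A.trace_sq_le_card_mul_sum_sum_sq
  rw [hS, mul_zero] at this
  exact h (pow_eq_zero_iff two_ne_zero |>.1 (le_antisymm this (sq_nonneg _)))

/-- The term `γ(α,β) · (a(α,β) : M - f(α,β))` of the `inf sup` defining `F_γ`. -/
noncomputable def renormalizedTerm (A : Matrix n n ℝ) (c : ℝ) (M : Matrix n n ℝ) : ℝ :=
  A.trace / (∑ i, ∑ j, A i j ^ 2) * ((∑ i, ∑ j, A i j * M i j) - c)

theorem renormalizedTerm_sub (A : Matrix n n ℝ) (c : ℝ) (M N : Matrix n n ℝ) :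
    renormalizedTerm A c N - renormalizedTerm A c M
      = A.trace / (∑ i, ∑ j, A i j ^ 2) * ∑ i, ∑ j, A i j * (N - M) i j := by
  simp only [renormalizedTerm, Matrix.sub_apply, mul_sub, sum_sub_distrib]
  ring

theorem abs_renormalizedTerm_sub_le (A : Matrix n n ℝ) (c : ℝ) (M N : Matrix n n ℝ) :
    |renormalizedTerm A c N - renormalizedTerm A c M|
      ≤ √(Fintype.card n) * √(∑ i, ∑ j, (N - M) i j ^ 2) := by
  rw [renormalizedTerm_sub]
  exact A.abs_trace_div_mul_sum_sum_mul_le (N - M)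

theorem Continuous.renormalizedTerm {X : Type*} [TopologicalSpace X] {A : X → Matrix n n ℝ}
    {c : X → ℝ} (hA : Continuous A) (hc : Continuous c) (htr : ∀ x, (A x).trace ≠ 0)
    (M : Matrix n n ℝ) : Continuous fun x => renormalizedTerm (A x) (c x) M := by
  have hentry (i j) : Continuous fun x => A x i j := (continuous_apply_apply i j).comp hA
  unfold _root_.renormalizedTerm
  exact (hA.matrix_trace.div (by fun_prop)
    fun x => Matrix.sum_sum_sq_ne_zero_of_trace_ne_zero (htr x)).mul (by fun_prop)

end Matrix

theorem lipschitz_estimate_isaacs_general (d : ℕ)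
    {𝒜 ℬ : Type*} [MetricSpace 𝒜] [CompactSpace 𝒜] [Nonempty 𝒜]
    [MetricSpace ℬ] [CompactSpace ℬ] [Nonempty ℬ]
    (a : 𝒜 → ℬ → Matrix (Fin d) (Fin d) ℝ) (f : 𝒜 → ℬ → ℝ)
    (ha : Continuous fun p : 𝒜 × ℬ => a p.1 p.2)
    (hf : Continuous fun p : 𝒜 × ℬ => f p.1 p.2)
    (htr : ∀ α β, 0 < Matrix.trace (a α β))
    (Fγ : Matrix (Fin d) (Fin d) ℝ → ℝ)
    (hFγ : ∀ M, Fγ M = ⨅ α : 𝒜, ⨆ β : ℬ,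
      (Matrix.trace (a α β) / (∑ i, ∑ j, (a α β i j) ^ 2)) *
        ((∑ i, ∑ j, a α β i j * M i j) - f α β)) :
    ∀ M N : Matrix (Fin d) (Fin d) ℝ,
      |Fγ N - Fγ M|
        ≤ (1 + Real.sqrt ((d : ℝ) + 1)) * Real.sqrt (∑ i, ∑ j, ((N - M) i j) ^ 2) := by
  intro M N
  have hF (X) : Fγ X = ⨅ α, ⨆ β, renormalizedTerm (a α β) (f α β) X := hFγ X
  have hbdd (X) : IsBounded (range (uncurry fun α β => renormalizedTerm (a α β) (f α β) X)) :=
    (isCompact_range ((ha.renormalizedTerm hf fun p => (htr p.1 p.2).ne') X)).isBounded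
  calc |Fγ N - Fγ M| ≤ √d * √(∑ i, ∑ j, (N - M) i j ^ 2) := by
        rw [hF, hF]
        refine abs_ciInf_ciSup_sub_le (hbdd N) (hbdd M) fun α β => ?_
        simpa using abs_renormalizedTerm_sub_le (a α β) (f α β) M N
    _ ≤ (1 + √(d + 1)) * √(∑ i, ∑ j, (N - M) i j ^ 2) := by
        gcongr
        linarith [Real.sqrt_le_sqrt (show (d : ℝ) ≤ d + 1 by linarith)]

/-- **Pointwise Lipschitz bound for the renormalized Isaacs operator.**
Let `d ≥ 1`, `ν ∈ (0,1]`, and let `𝒜`, `ℬ` be nonempty compact metric spaces. Let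
`a : 𝒜 × ℬ → ℝ^{d×d}` and `f : 𝒜 × ℬ → ℝ` be continuous, with each `a(α,β)` having
positive trace and satisfying the Cordes condition `|a(α,β)|² ≤ (tr a(α,β))²/(d−1+ν)`.
With `γ(α,β) := tr a(α,β)/|a(α,β)|²` and
`F_γ(M) := inf_α sup_β [γ(α,β)·(a(α,β):M − f(α,β))]`, we have for all matrices `M`, `N`:
`|F_γ(N) − F_γ(M)| ≤ (1 + √(d+1))·|N − M|` (Frobenius norm). -/
theorem lipschitz_estimate_isaacs (d : ℕ) (hd : 1 ≤ d) (ν : ℝ) (hν0 : 0 < ν) (hν1 : ν ≤ 1)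
    {𝒜 ℬ : Type*} [MetricSpace 𝒜] [CompactSpace 𝒜] [Nonempty 𝒜]
    [MetricSpace ℬ] [CompactSpace ℬ] [Nonempty ℬ]
    (a : 𝒜 → ℬ → Matrix (Fin d) (Fin d) ℝ) (f : 𝒜 → ℬ → ℝ)
    (ha : Continuous fun p : 𝒜 × ℬ => a p.1 p.2)
    (hf : Continuous fun p : 𝒜 × ℬ => f p.1 p.2)
    (htr : ∀ α β, 0 < Matrix.trace (a α β))
    (hcordes : ∀ α β,
      (∑ i, ∑ j, (a α β i j) ^ 2) ≤ (Matrix.trace (a α β)) ^ 2 / ((d : ℝ) - 1 + ν))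
    (Fγ : Matrix (Fin d) (Fin d) ℝ → ℝ)
    (hFγ : ∀ M, Fγ M = ⨅ α : 𝒜, ⨆ β : ℬ,
      (Matrix.trace (a α β) / (∑ i, ∑ j, (a α β i j) ^ 2)) *
        ((∑ i, ∑ j, a α β i j * M i j) - f α β)) :
    ∀ M N : Matrix (Fin d) (Fin d) ℝ,
      |Fγ N - Fγ M|
        ≤ (1 + Real.sqrt ((d : ℝ) + 1)) * Real.sqrt (∑ i, ∑ j, ((N - M) i j) ^ 2) :=
  lipschitz_estimate_isaacs_general d a f ha hf htr Fγ hFγ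
end

section
/- Let d ≥ 1, ν ∈ (0,1], and let 𝒜, ℬ be nonempty compact metric spaces. Let a : ℝ^d × 𝒜 × ℬ → ℝ^{d×d} and f : ℝ^d × 𝒜 × ℬ → ℝ be continuous, and suppose that for every (x,α,β) the matrix a(x,α,β) has positive trace and satisfies the Cordes condition |a(x,α,β)|² ≤ (tr a(x,α,β))²/(d−1+ν). Set γ(x,α,β) := tr a(x,α,β)/|a(x,α,β)|², and for a smooth compactly supported w : ℝ^d → ℝ define F_γ[w](x) := inf_{α} sup_{β} [γ(x,α,β)·(a(x,α,β):∇²w(x) − f(x,α,β))], where ∇²w(x) is the matrix of second partial derivatives of w at x. Then for all smooth compactly supported v, w : ℝ^d → ℝ, ∫_{ℝ^d} (F_γ[w](x) − F_γ[v](x))·Δ(w−v)(x) dx ≥ (1 − √(1−ν)) ∫_{ℝ^d} (Δ(w−v)(x))² dx. -/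
open MeasureTheory

/-- The second partial derivative `∂_i ∂_j u` of `u : ℝ^d → ℝ`, expressed via iterated
Fréchet derivatives in the coordinate directions. -/
noncomputable def secondPartial {d : ℕ} (u : (Fin d → ℝ) → ℝ) (x : Fin d → ℝ)
    (i j : Fin d) : ℝ :=
  fderiv ℝ (fun y => fderiv ℝ u y (Pi.single j 1)) x (Pi.single i 1)

noncomputable def pd {d : ℕ} (i : Fin d) (u : (Fin d → ℝ) → ℝ) : (Fin d → ℝ) → ℝ :=
  fun x => fderiv ℝ u x (Pi.single i 1)

section PdLemmas

variable {d : ℕ}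

lemma pd_contDiff (i : Fin d) {u : (Fin d → ℝ) → ℝ} (hu : ContDiff ℝ (⊤ : ℕ∞) u) :
    ContDiff ℝ (⊤ : ℕ∞) (pd i u) :=
  (hu.fderiv_right (by simp)).clm_apply contDiff_const

lemma pd_hcs (i : Fin d) {u : (Fin d → ℝ) → ℝ} (hu : HasCompactSupport u) :
    HasCompactSupport (pd i u) :=
  hu.fderiv_apply ℝ (Pi.single i 1)

lemma pd_continuous (i : Fin d) {u : (Fin d → ℝ) → ℝ} (hu : ContDiff ℝ (⊤ : ℕ∞) u) :
    Continuous (pd i u) := (pd_contDiff i hu).continuous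

lemma pd_eq_snd (i j : Fin d) {u : (Fin d → ℝ) → ℝ} (hu : ContDiff ℝ (⊤ : ℕ∞) u) (x : Fin d → ℝ) :
    pd i (pd j u) x = fderiv ℝ (fderiv ℝ u) x (Pi.single i 1) (Pi.single j 1) := by
  have h1 : DifferentiableAt ℝ (fderiv ℝ u) x :=
    ((hu.fderiv_right (m := (⊤ : ℕ∞)) (by simp)).differentiable (by simp)).differentiableAt
  have : pd i (pd j u) x
      = ((fderiv ℝ u x).comp (fderiv ℝ (fun _ => Pi.single j 1 : (Fin d → ℝ) → (Fin d → ℝ)) x)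
          + (fderiv ℝ (fderiv ℝ u) x).flip (Pi.single j 1)) (Pi.single i 1) := by
    unfold pd
    rw [fderiv_clm_apply h1 (differentiableAt_const _)]
  simpa using this

lemma pd_comm {u : (Fin d → ℝ) → ℝ} (hu : ContDiff ℝ (⊤ : ℕ∞) u) (i j : Fin d) :
    pd i (pd j u) = pd j (pd i u) := by
  funext x
  rw [pd_eq_snd i j hu, pd_eq_snd j i hu]
  exact second_derivative_symmetric
    (fun y => ((hu.differentiable (by simp)) y).hasFDerivAt)
    (((hu.fderiv_right (m := (⊤ : ℕ∞)) (by simp)).differentiable (by simp)) x).hasFDerivAt _ _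

lemma secondPartial_pd (u : (Fin d → ℝ) → ℝ) (x : Fin d → ℝ) (i j : Fin d) :
    secondPartial u x i j = pd i (pd j u) x := rfl

lemma pd_tsupport_subset (i : Fin d) (u : (Fin d → ℝ) → ℝ) :
    tsupport (pd i u) ⊆ tsupport u := by
  apply closure_minimal _ (isClosed_tsupport u)
  intro x hx
  apply support_fderiv_subset ℝ
  rw [Function.mem_support] at hx ⊢
  intro h
  exact hx (by simp [pd, h])

lemma pd2_zero_of_nmem {z : (Fin d → ℝ) → ℝ} (i j : Fin d) {x : Fin d → ℝ}
    (hx : x ∉ tsupport z) : pd i (pd j z) x = 0 := by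
  by_contra h
  have h1 : x ∈ tsupport (pd i (pd j z)) := subset_closure (Function.mem_support.2 h)
  exact hx (pd_tsupport_subset j z (pd_tsupport_subset i (pd j z) h1))

lemma pd2_sub {w v : (Fin d → ℝ) → ℝ} (hw : ContDiff ℝ (⊤ : ℕ∞) w) (hv : ContDiff ℝ (⊤ : ℕ∞) v)
    (i j : Fin d) (x : Fin d → ℝ) :
    pd i (pd j (fun y => w y - v y)) x = pd i (pd j w) x - pd i (pd j v) x := by
  have h1 : pd j (fun y => w y - v y) = fun y => pd j w y - pd j v y := by
    funext y
    unfold pd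
    rw [fderiv_fun_sub ((hw.differentiable (by simp)) y) ((hv.differentiable (by simp)) y)]
    simp
  rw [h1]
  have hdw : HasFDerivAt (pd j w) (fderiv ℝ (pd j w) x) x :=
    (((pd_contDiff j hw).differentiable (by simp)) x).hasFDerivAt
  have hdv : HasFDerivAt (pd j v) (fderiv ℝ (pd j v) x) x :=
    (((pd_contDiff j hv).differentiable (by simp)) x).hasFDerivAt
  have hsub := fderiv_fun_sub hdw.differentiableAt hdv.differentiableAt
  calc pd i (fun y => pd j w y - pd j v y) x
      = (fderiv ℝ (fun y => pd j w y - pd j v y) x) (Pi.single i 1) := rfl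
    _ = (fderiv ℝ (pd j w) x - fderiv ℝ (pd j v) x) (Pi.single i 1) := by rw [hsub]
    _ = pd i (pd j w) x - pd i (pd j v) x := by
        rw [ContinuousLinearMap.sub_apply]; rfl

end PdLemmas

section IBP

variable {n : ℕ}

lemma integral_pd_eq_zero {g : (Fin (n+1) → ℝ) → ℝ} (hg : ContDiff ℝ (⊤ : ℕ∞) g)
    (hgs : HasCompactSupport g) (i : Fin (n+1)) :
    ∫ x : Fin (n+1) → ℝ, pd i g x = 0 := by
  obtain ⟨r, hr⟩ := hgs.isBounded.subset_closedBall 0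
  set R : ℝ := |r| + 1 with hR
  have hRpos : 0 < R := by positivity
  have hsub : tsupport g ⊆ Metric.ball (0 : Fin (n+1) → ℝ) R := by
    refine hr.trans (Metric.closedBall_subset_ball ?_)
    nlinarith [le_abs_self r]
  set L : ℝ →L[ℝ] (Fin (n+1) → ℝ) :=
    ContinuousLinearMap.pi (fun j => if j = i then ContinuousLinearMap.id ℝ ℝ else 0) with hL
  have hLapp : ∀ (c : ℝ) (j : Fin (n+1)), L c j = if j = i then c else 0 := by
    intro c j
    simp only [hL, ContinuousLinearMap.pi_apply]
    by_cases h : j = i <;> simp [h]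
  set a : Fin (n+1) → ℝ := fun _ => -R with ha
  set b : Fin (n+1) → ℝ := fun _ => R with hb
  have hle : a ≤ b := fun j => by
    simp only [ha, hb]; linarith
  have hdiff : Differentiable ℝ g := hg.differentiable (by simp)
  have hball : Metric.ball (0 : Fin (n+1) → ℝ) R ⊆ Set.Icc a b := by
    intro x hx
    simp only [Metric.mem_ball, dist_zero_right] at hx
    constructor <;> intro j
    · have := abs_le.1 ((norm_le_pi_norm x j).trans hx.le) |>.1
      simpa [ha] using this
    · have := abs_le.1 ((norm_le_pi_norm x j).trans hx.le) |>.2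
      simpa [hb] using this
  have hcontpd : Continuous (pd i g) :=
    ((hg.fderiv_right (m := (⊤ : ℕ∞)) (by simp)).clm_apply contDiff_const).continuous
  have key := integral_divergence_of_hasFDerivAt_off_countable a b hle
      (fun x => L (g x)) (fun x => L.comp (fderiv ℝ g x)) ∅ Set.countable_empty
      (L.continuous.comp hg.continuous).continuousOn
      (fun x _ => L.hasFDerivAt.comp x (hdiff x).hasFDerivAt)
      (by
        have : (fun x => ∑ j, (L.comp (fderiv ℝ g x)) (Pi.single j 1) j) = pd i g := by
          funext x
          simp only [ContinuousLinearMap.comp_apply, hLapp]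
          rw [Finset.sum_ite_eq' Finset.univ i (fun j => fderiv ℝ g x (Pi.single j 1))]
          simp [pd]
        rw [this]
        exact hcontpd.continuousOn.integrableOn_compact isCompact_Icc)
  have hlhs : (∫ x in Set.Icc a b, ∑ j, (L.comp (fderiv ℝ g x)) (Pi.single j 1) j)
      = ∫ x : Fin (n+1) → ℝ, pd i g x := by
    have h1 : (fun x => ∑ j, (L.comp (fderiv ℝ g x)) (Pi.single j 1) j) = pd i g := by
      funext x
      simp only [ContinuousLinearMap.comp_apply, hLapp]
      rw [Finset.sum_ite_eq' Finset.univ i (fun j => fderiv ℝ g x (Pi.single j 1))]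
      simp [pd]
    rw [h1]
    apply setIntegral_eq_integral_of_forall_compl_eq_zero
    intro x hx
    have hxt : x ∉ tsupport g := fun h => hx (hball (hsub h))
    have : x ∉ Function.support (fderiv ℝ g) := fun h => hxt (support_fderiv_subset ℝ h)
    simp only [Function.notMem_support] at this
    simp [pd, this]
  have hface : ∀ (i' : Fin (n+1)) (c : ℝ), |c| = R →
      ∀ y : Fin n → ℝ, L (g (Fin.insertNth i' c y)) i' = 0 := by
    intro i' c hc y
    set pt : Fin (n+1) → ℝ := Fin.insertNth i' c y with hpt
    have : g pt = 0 := by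
      apply image_eq_zero_of_notMem_tsupport
      intro hmem
      have h3 := hsub hmem
      simp only [Metric.mem_ball, dist_zero_right] at h3
      have h2 : |pt i'| ≤ ‖pt‖ := by
        simpa using norm_le_pi_norm pt i'
      have h4 : pt i' = c := by
        rw [hpt]; exact Fin.insertNth_apply_same (α := fun _ : Fin (n+1) => ℝ) i' c y
      rw [h4, hc] at h2
      linarith
    rw [this]
    simp
  rw [← hlhs, key]
  apply Finset.sum_eq_zero
  intro i' _
  have h1 : (∫ y in Set.Icc (a ∘ Fin.succAbove i') (b ∘ Fin.succAbove i'),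
      L (g (Fin.insertNth i' (b i') y)) i') = 0 := by
    apply integral_eq_zero_of_ae
    filter_upwards with y
    exact hface i' (b i') (by simp [hb, abs_of_pos hRpos]) y
  have h2 : (∫ y in Set.Icc (a ∘ Fin.succAbove i') (b ∘ Fin.succAbove i'),
      L (g (Fin.insertNth i' (a i') y)) i') = 0 := by
    apply integral_eq_zero_of_ae
    filter_upwards with y
    exact hface i' (a i') (by simp [ha, abs_of_pos hRpos]) y
  rw [h1, h2, sub_zero]

lemma cont_cs_integrable {u : (Fin (n+1) → ℝ) → ℝ} (hu : Continuous u)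
    (hus : HasCompactSupport u) : Integrable u (volume : Measure (Fin (n+1) → ℝ)) :=
  hu.integrable_of_hasCompactSupport hus

lemma ibp {p q : (Fin (n+1) → ℝ) → ℝ} (hp : ContDiff ℝ (⊤ : ℕ∞) p) (hq : ContDiff ℝ (⊤ : ℕ∞) q)
    (hps : HasCompactSupport p) (hqs : HasCompactSupport q) (i : Fin (n+1)) :
    ∫ x : Fin (n+1) → ℝ, pd i p x * q x = - ∫ x : Fin (n+1) → ℝ, p x * pd i q x := by
  have hpd : Differentiable ℝ p := hp.differentiable (by simp)
  have hqd : Differentiable ℝ q := hq.differentiable (by simp)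
  have hmul : ContDiff ℝ (⊤ : ℕ∞) (fun y => p y * q y) := hp.mul hq
  have hmuls : HasCompactSupport (fun y => p y * q y) := by
    have : HasCompactSupport (p * q) := hps.mul_right
    exact this
  have hzero := integral_pd_eq_zero hmul hmuls i
  have hrw : ∀ x, pd i (fun y => p y * q y) x = pd i p x * q x + p x * pd i q x := by
    intro x
    unfold pd
    rw [fderiv_fun_mul (hpd x) (hqd x)]
    simp [mul_comm]
    ring
  rw [show (fun x => pd i (fun y => p y * q y) x)
    = fun x => pd i p x * q x + p x * pd i q x from funext hrw] at hzero
  have h1 : Integrable (fun x => pd i p x * q x) (volume : Measure (Fin (n+1) → ℝ)) := by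
    apply cont_cs_integrable ((pd_continuous i hp).mul hq.continuous)
    exact ((pd_hcs i hps).mul_right)
  have h2 : Integrable (fun x => p x * pd i q x) (volume : Measure (Fin (n+1) → ℝ)) := by
    apply cont_cs_integrable (hp.continuous.mul (pd_continuous i hq))
    exact hps.mul_right
  have := integral_add h1 h2
  rw [hzero] at this
  linarith [this]

lemma mt_pair {z : (Fin (n+1) → ℝ) → ℝ} (hz : ContDiff ℝ (⊤ : ℕ∞) z) (hzs : HasCompactSupport z)
    (i j : Fin (n+1)) :
    ∫ x : Fin (n+1) → ℝ, pd i (pd j z) x * pd i (pd j z) x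
      = ∫ x : Fin (n+1) → ℝ, pd i (pd i z) x * pd j (pd j z) x := by
  have hzj : ContDiff ℝ (⊤ : ℕ∞) (pd j z) := pd_contDiff j hz
  have hzjs : HasCompactSupport (pd j z) := pd_hcs j hzs
  have hzij : ContDiff ℝ (⊤ : ℕ∞) (pd i (pd j z)) := pd_contDiff i hzj
  have hzijs : HasCompactSupport (pd i (pd j z)) := pd_hcs i hzjs
  have hzii : ContDiff ℝ (⊤ : ℕ∞) (pd i (pd i z)) := pd_contDiff i (pd_contDiff i hz)
  have hziis : HasCompactSupport (pd i (pd i z)) := pd_hcs i (pd_hcs i hzs)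
  have step1 := ibp (p := pd j z) (q := pd i (pd j z)) hzj hzij hzjs hzijs i
  have hcomm : pd i (pd i (pd j z)) = pd j (pd i (pd i z)) := by
    rw [pd_comm hz i j]
    exact pd_comm (pd_contDiff i hz) i j
  rw [hcomm] at step1
  have step2 := ibp (p := pd i (pd i z)) (q := pd j z) hzii hzj hziis hzjs j
  have hc2 : (∫ x : Fin (n+1) → ℝ, pd j z x * pd j (pd i (pd i z)) x)
      = ∫ x : Fin (n+1) → ℝ, pd j (pd i (pd i z)) x * pd j z x := by
    congr 1; funext x; ring
  rw [step1, hc2, step2]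
  ring

lemma miranda_talenti {z : (Fin (n+1) → ℝ) → ℝ} (hz : ContDiff ℝ (⊤ : ℕ∞) z)
    (hzs : HasCompactSupport z) :
    ∫ x : Fin (n+1) → ℝ, ∑ i, ∑ j, (pd i (pd j z) x)^2
      = ∫ x : Fin (n+1) → ℝ, (∑ i, pd i (pd i z) x)^2 := by
  have hint : ∀ (i j k l : Fin (n+1)),
      Integrable (fun x => pd i (pd j z) x * pd k (pd l z) x)
        (volume : Measure (Fin (n+1) → ℝ)) := by
    intro i j k l
    apply cont_cs_integrable
    · exact (pd_continuous i (pd_contDiff j hz)).mul (pd_continuous k (pd_contDiff l hz))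
    · exact (pd_hcs i (pd_hcs j hzs)).mul_right
  have lhs_eq : ∫ x : Fin (n+1) → ℝ, ∑ i, ∑ j, (pd i (pd j z) x)^2
      = ∑ i, ∑ j, ∫ x : Fin (n+1) → ℝ, pd i (pd j z) x * pd i (pd j z) x := by
    rw [integral_finset_sum]
    · congr 1; funext i
      rw [integral_finset_sum]
      · congr 1; funext j; congr 1; funext x; ring
      · intro j _; simpa [sq] using hint i j i j
    · intro i _
      apply integrable_finset_sum
      intro j _; simpa [sq] using hint i j i j
  have rhs_eq : ∫ x : Fin (n+1) → ℝ, (∑ i, pd i (pd i z) x)^2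
      = ∑ i, ∑ j, ∫ x : Fin (n+1) → ℝ, pd i (pd i z) x * pd j (pd j z) x := by
    have : ∀ x : Fin (n+1) → ℝ, (∑ i, pd i (pd i z) x)^2
        = ∑ i, ∑ j, pd i (pd i z) x * pd j (pd j z) x := by
      intro x
      rw [sq, Finset.sum_mul_sum]
    rw [show (fun x : Fin (n+1) → ℝ => (∑ i, pd i (pd i z) x)^2)
      = fun x => ∑ i, ∑ j, pd i (pd i z) x * pd j (pd j z) x from funext this]
    rw [integral_finset_sum]
    · congr 1; funext i
      rw [integral_finset_sum]
      intro j _; exact hint i i j j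
    · intro i _
      exact integrable_finset_sum _ (fun j _ => hint i i j j)
  rw [lhs_eq, rhs_eq]
  exact Finset.sum_congr rfl fun i _ => Finset.sum_congr rfl fun j _ => mt_pair hz hzs i j

end IBP

section InfSup

lemma exists_bounds {𝒜 ℬ : Type*} [TopologicalSpace 𝒜] [TopologicalSpace ℬ]
    [CompactSpace 𝒜] [CompactSpace ℬ] (h : 𝒜 → ℬ → ℝ)
    (hc : Continuous fun p : 𝒜 × ℬ => h p.1 p.2) :
    ∃ m M : ℝ, ∀ α β, m ≤ h α β ∧ h α β ≤ M := by
  obtain ⟨m, hm⟩ := (isCompact_range hc).bddBelow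
  obtain ⟨M, hM⟩ := (isCompact_range hc).bddAbove
  exact ⟨m, M, fun α β => ⟨hm ⟨(α, β), rfl⟩, hM ⟨(α, β), rfl⟩⟩⟩

lemma ciInf_ciSup_sandwich {𝒜 ℬ : Type*} [Nonempty 𝒜] [Nonempty ℬ]
    (h g : 𝒜 → ℬ → ℝ) {mh Mh mg Mg : ℝ}
    (hhb : ∀ α β, mh ≤ h α β ∧ h α β ≤ Mh)
    (hgb : ∀ α β, mg ≤ g α β ∧ g α β ≤ Mg)
    (t k : ℝ) (htk : ∀ α β, |h α β - g α β - t| ≤ k) :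
    |(⨅ α, ⨆ β, h α β) - (⨅ α, ⨆ β, g α β) - t| ≤ k := by
  have bddh : ∀ α, BddAbove (Set.range (h α)) :=
    fun α => ⟨Mh, by rintro _ ⟨β, rfl⟩; exact (hhb α β).2⟩
  have bddg : ∀ α, BddAbove (Set.range (g α)) :=
    fun α => ⟨Mg, by rintro _ ⟨β, rfl⟩; exact (hgb α β).2⟩
  set W : 𝒜 → ℝ := fun α => ⨆ β, h α β with hW
  set V : 𝒜 → ℝ := fun α => ⨆ β, g α β with hV
  have hWlb : ∀ α, mh ≤ W α := by
    intro α
    obtain β := Classical.arbitrary ℬ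
    exact (hhb α β).1.trans (le_ciSup (bddh α) β)
  have hVlb : ∀ α, mg ≤ V α := by
    intro α
    obtain β := Classical.arbitrary ℬ
    exact (hgb α β).1.trans (le_ciSup (bddg α) β)
  have bddW : BddBelow (Set.range W) := ⟨mh, by rintro _ ⟨α, rfl⟩; exact hWlb α⟩
  have bddV : BddBelow (Set.range V) := ⟨mg, by rintro _ ⟨α, rfl⟩; exact hVlb α⟩
  have hub : ∀ α, W α ≤ V α + (t + k) := by
    intro α
    apply ciSup_le
    intro β
    have h1 := (abs_le.1 (htk α β)).2
    have h2 := le_ciSup (bddg α) β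
    simp only [hV] at h2 ⊢
    linarith
  have hlb : ∀ α, V α + (t - k) ≤ W α := by
    intro α
    have : ∀ β, g α β ≤ W α - (t - k) := by
      intro β
      have h1 := (abs_le.1 (htk α β)).1
      have h2 := le_ciSup (bddh α) β
      simp only [hW] at h2 ⊢
      linarith
    have := ciSup_le this
    simp only [hV]
    linarith
  have h3 : (⨅ α, W α) ≤ (⨅ α, V α) + (t + k) := by
    have : ∀ α, (⨅ α, W α) - (t + k) ≤ V α := by
      intro α
      have h4 := ciInf_le bddW α
      have h5 := hub α
      linarith
    have := le_ciInf this
    linarith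
  have h4 : (⨅ α, V α) + (t - k) ≤ (⨅ α, W α) := by
    have : ∀ α, (⨅ α, V α) + (t - k) ≤ W α := by
      intro α
      have h5 := ciInf_le bddV α
      have h6 := hlb α
      linarith
    exact le_ciInf this
  rw [abs_le]
  constructor <;> [linarith; linarith]

lemma continuous_infsup {X : Type*} [MetricSpace X] {𝒜 ℬ : Type*}
    [TopologicalSpace 𝒜] [TopologicalSpace ℬ] [CompactSpace 𝒜] [CompactSpace ℬ]
    [Nonempty 𝒜] [Nonempty ℬ]
    (ψ : X → 𝒜 → ℬ → ℝ) (hψ : Continuous fun p : X × 𝒜 × ℬ => ψ p.1 p.2.1 p.2.2) :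
    Continuous fun x => ⨅ α, ⨆ β, ψ x α β := by
  rw [Metric.continuous_iff]
  intro x₀ ε hε
  set O : Set (X × 𝒜 × ℬ) := {p | |ψ p.1 p.2.1 p.2.2 - ψ x₀ p.2.1 p.2.2| < ε / 2} with hO
  have hcont2 : Continuous fun p : X × 𝒜 × ℬ => ψ p.1 p.2.1 p.2.2 - ψ x₀ p.2.1 p.2.2 := by
    apply hψ.sub
    exact hψ.comp (continuous_const.prodMk continuous_snd)
  have hOopen : IsOpen O := by
    have : O = (fun p : X × 𝒜 × ℬ => |ψ p.1 p.2.1 p.2.2 - ψ x₀ p.2.1 p.2.2|) ⁻¹'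
        (Set.Iio (ε / 2)) := rfl
    rw [this]
    exact (hcont2.abs).isOpen_preimage _ isOpen_Iio
  have hsub : ({x₀} : Set X) ×ˢ (Set.univ : Set (𝒜 × ℬ)) ⊆ O := by
    rintro ⟨y, α, β⟩ ⟨hy, -⟩
    simp only [Set.mem_singleton_iff] at hy
    subst hy
    simp [hO, half_pos hε]
  obtain ⟨u, v, huo, -, hxu, hvv, huv⟩ :=
    generalized_tube_lemma isCompact_singleton isCompact_univ hOopen hsub
  obtain ⟨δ, hδ, hball⟩ := Metric.isOpen_iff.1 huo x₀ (hxu rfl)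
  refine ⟨δ, hδ, fun y hy => ?_⟩
  have hmem : ∀ α β, |ψ y α β - ψ x₀ α β| ≤ ε / 2 := by
    intro α β
    have : (y, α, β) ∈ O := huv ⟨hball hy, hvv (Set.mem_univ _)⟩
    exact le_of_lt this
  obtain ⟨mh, Mh, hhb⟩ := exists_bounds (ψ y)
    (hψ.comp (Continuous.prodMk continuous_const continuous_id))
  obtain ⟨mg, Mg, hgb⟩ := exists_bounds (ψ x₀)
    (hψ.comp (Continuous.prodMk continuous_const continuous_id))
  have := ciInf_ciSup_sandwich (ψ y) (ψ x₀) hhb hgb 0 (ε / 2)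
    (fun α β => by simpa using hmem α β)
  rw [Real.dist_eq]
  simp only [sub_zero] at this
  linarith [this]

end InfSup

section Cordes

lemma frob_pos {d : ℕ} (A : Matrix (Fin d) (Fin d) ℝ) (htr : 0 < Matrix.trace A) :
    0 < ∑ i, ∑ j, (A i j)^2 := by
  have htsum : Matrix.trace A = ∑ i, A i i := by simp [Matrix.trace, Matrix.diag]
  by_contra hns
  push_neg at hns
  have hzero : ∀ i j, A i j = 0 := by
    intro i j
    have h1 : (0:ℝ) ≤ ∑ j, (A i j)^2 := Finset.sum_nonneg fun _ _ => sq_nonneg _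
    have h2 : ∑ j, (A i j)^2 ≤ ∑ i, ∑ j, (A i j)^2 := by
      exact Finset.single_le_sum (f := fun k => ∑ j, (A k j)^2)
        (fun k _ => Finset.sum_nonneg fun _ _ => sq_nonneg _) (Finset.mem_univ i)
    have h3 : ∑ j, (A i j)^2 = 0 := le_antisymm (h2.trans hns) h1
    have h4 : A i j ^ 2 = 0 := by
      have h5 := Finset.sum_eq_zero_iff_of_nonneg (f := fun k => (A i k)^2)
        (s := Finset.univ) (fun k _ => sq_nonneg (A i k))
      exact h5.1 h3 j (Finset.mem_univ j)
    exact sq_eq_zero_iff.1 h4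
  have : Matrix.trace A = 0 := by
    rw [htsum]; exact Finset.sum_eq_zero fun i _ => hzero i i
  rw [this] at htr; exact lt_irrefl 0 htr

lemma cordes_pointwise {d : ℕ} (hd : 1 ≤ d) {ν : ℝ} (hν0 : 0 < ν) (hν1 : ν ≤ 1)
    (A : Matrix (Fin d) (Fin d) ℝ) (htr : 0 < Matrix.trace A)
    (hcordes : (∑ i, ∑ j, (A i j)^2) ≤ (Matrix.trace A)^2 / ((d:ℝ) - 1 + ν))
    (M : Matrix (Fin d) (Fin d) ℝ) :
    |(Matrix.trace A / ∑ i, ∑ j, (A i j)^2) * (∑ i, ∑ j, A i j * M i j) - ∑ i, M i i|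
      ≤ Real.sqrt (1 - ν) * Real.sqrt (∑ i, ∑ j, (M i j)^2) := by
  set s : ℝ := ∑ i, ∑ j, (A i j)^2 with hs
  set t : ℝ := Matrix.trace A with ht
  have htsum : t = ∑ i, A i i := by simp [ht, Matrix.trace, Matrix.diag]
  have hspos : 0 < s := frob_pos A htr
  set c : ℝ := t / s with hc
  set b : Fin d → Fin d → ℝ := fun i j => c * A i j - (if i = j then 1 else 0) with hb
  set S2 : ℝ := ∑ i, ∑ j, (M i j)^2 with hS2
  have hS2nn : 0 ≤ S2 := Finset.sum_nonneg fun _ _ => Finset.sum_nonneg fun _ _ => sq_nonneg _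
  have hD : (0:ℝ) < (d:ℝ) - 1 + ν := by
    have : (1:ℝ) ≤ (d:ℝ) := by exact_mod_cast hd
    linarith
  have hkey : (∑ i, ∑ j, b i j * M i j)
      = c * (∑ i, ∑ j, A i j * M i j) - ∑ i, M i i := by
    have : ∀ i j, b i j * M i j = c * (A i j * M i j) - (if i = j then M i j else 0) := by
      intro i j
      by_cases h : i = j <;> simp [hb, h] <;> ring
    simp only [this, Finset.sum_sub_distrib, ← Finset.mul_sum]
    congr 1
    exact Finset.sum_congr rfl fun i _ => by simp
  have hbnorm : (∑ i, ∑ j, (b i j)^2) ≤ 1 - ν := by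
    have hterm : ∀ i j, (b i j)^2
        = c^2 * (A i j)^2 - 2 * c * (if i = j then A i j else 0)
          + (if i = j then 1 else 0) := by
      intro i j
      by_cases h : i = j <;> simp [hb, h] <;> ring
    have h1 : (∑ i, ∑ j, if i = j then A i j else 0) = t := by
      rw [htsum]; exact Finset.sum_congr rfl fun i _ => by simp
    have h2 : (∑ _i : Fin d, ∑ _j : Fin d, if _i = _j then (1:ℝ) else 0) = (d:ℝ) := by simp
    have hsum : (∑ i, ∑ j, (b i j)^2) = c^2 * s - 2 * c * t + (d:ℝ) := by
      have expand : (∑ i, ∑ j, (b i j)^2)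
          = c^2 * (∑ i, ∑ j, (A i j)^2)
            - 2*c*(∑ i, ∑ j, if i = j then A i j else 0)
            + (∑ _i : Fin d, ∑ _j : Fin d, if _i = _j then (1:ℝ) else 0) := by
        simp only [hterm, Finset.sum_add_distrib, Finset.sum_sub_distrib, ← Finset.mul_sum]
      rw [expand, h1, h2, ← hs]
    rw [hsum]
    have hcs : c^2 * s - 2*c*t = - t^2 / s := by
      rw [hc]; field_simp; ring
    rw [hcs]
    have hts : (d:ℝ) - 1 + ν ≤ t^2 / s := by
      rw [le_div_iff₀ hspos]
      calc ((d:ℝ) - 1 + ν) * s ≤ ((d:ℝ) - 1 + ν) * (t^2 / ((d:ℝ) - 1 + ν)) := by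
            apply mul_le_mul_of_nonneg_left hcordes hD.le
        _ = t^2 := by field_simp
    have : -t^2/s ≤ -((d:ℝ) - 1 + ν) := by
      rw [neg_div]; linarith
    linarith
  have hCS : (∑ i, ∑ j, b i j * M i j)^2 ≤ (∑ i, ∑ j, (b i j)^2) * S2 := by
    have hcs0 := Finset.sum_mul_sq_le_sq_mul_sq (Finset.univ ×ˢ Finset.univ)
      (fun p : Fin d × Fin d => b p.1 p.2) (fun p : Fin d × Fin d => M p.1 p.2)
    rw [Finset.sum_product, Finset.sum_product, Finset.sum_product] at hcs0
    rw [hS2]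
    exact hcs0
  have hX2 : (∑ i, ∑ j, b i j * M i j)^2 ≤ (1 - ν) * S2 := by
    apply hCS.trans
    apply mul_le_mul_of_nonneg_right hbnorm hS2nn
  calc |(t / s) * (∑ i, ∑ j, A i j * M i j) - ∑ i, M i i|
      = |∑ i, ∑ j, b i j * M i j| := by rw [hkey, hc]
    _ = Real.sqrt ((∑ i, ∑ j, b i j * M i j)^2) := (Real.sqrt_sq_eq_abs _).symm
    _ ≤ Real.sqrt ((1 - ν) * S2) := Real.sqrt_le_sqrt hX2
    _ = Real.sqrt (1 - ν) * Real.sqrt S2 := Real.sqrt_mul (by linarith) _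

end Cordes

/-- **Strong monotonicity of the renormalized Isaacs operator (whole-space smooth
analogue of (3.9)).** Let `d ≥ 1`, `ν ∈ (0,1]`, `𝒜`, `ℬ` nonempty compact metric spaces,
`a : ℝ^d × 𝒜 × ℬ → ℝ^{d×d}` and `f : ℝ^d × 𝒜 × ℬ → ℝ` continuous, with each matrix
`a(x,α,β)` of positive trace satisfying the Cordes condition
`|a(x,α,β)|² ≤ (tr a(x,α,β))²/(d−1+ν)`. With `γ := tr a/|a|²` and
`F_γ[w](x) := inf_α sup_β [γ(x,α,β)·(a(x,α,β):∇²w(x) − f(x,α,β))]`, for all smooth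
compactly supported `v, w : ℝ^d → ℝ`:
`∫ (F_γ[w] − F_γ[v])·Δ(w−v) ≥ (1 − √(1−ν)) ∫ (Δ(w−v))²`. -/
theorem strong_monotonicity_isaacs (d : ℕ) (hd : 1 ≤ d) (ν : ℝ) (hν0 : 0 < ν) (hν1 : ν ≤ 1)
    {𝒜 ℬ : Type*} [MetricSpace 𝒜] [CompactSpace 𝒜] [Nonempty 𝒜]
    [MetricSpace ℬ] [CompactSpace ℬ] [Nonempty ℬ]
    (a : (Fin d → ℝ) → 𝒜 → ℬ → Matrix (Fin d) (Fin d) ℝ)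
    (f : (Fin d → ℝ) → 𝒜 → ℬ → ℝ)
    (ha : Continuous fun p : (Fin d → ℝ) × 𝒜 × ℬ => a p.1 p.2.1 p.2.2)
    (hf : Continuous fun p : (Fin d → ℝ) × 𝒜 × ℬ => f p.1 p.2.1 p.2.2)
    (htr : ∀ x α β, 0 < Matrix.trace (a x α β))
    (hcordes : ∀ x α β,
      (∑ i, ∑ j, (a x α β i j) ^ 2) ≤ (Matrix.trace (a x α β)) ^ 2 / ((d : ℝ) - 1 + ν))
    (Fγ : ((Fin d → ℝ) → ℝ) → (Fin d → ℝ) → ℝ)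
    (hFγ : ∀ (w : (Fin d → ℝ) → ℝ) (x : Fin d → ℝ),
      Fγ w x = ⨅ α : 𝒜, ⨆ β : ℬ,
        (Matrix.trace (a x α β) / (∑ i, ∑ j, (a x α β i j) ^ 2)) *
          ((∑ i, ∑ j, a x α β i j * secondPartial w x i j) - f x α β)) :
    ∀ v w : (Fin d → ℝ) → ℝ, ContDiff ℝ (⊤ : ℕ∞) v → ContDiff ℝ (⊤ : ℕ∞) w →
      HasCompactSupport v → HasCompactSupport w →
      (1 - Real.sqrt (1 - ν)) *
          ∫ x : Fin d → ℝ, (∑ i, secondPartial (fun y => w y - v y) x i i) ^ 2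
        ≤ ∫ x : Fin d → ℝ,
            (Fγ w x - Fγ v x) * (∑ i, secondPartial (fun y => w y - v y) x i i) := by
  obtain ⟨n, rfl⟩ : ∃ n, d = n + 1 := ⟨d - 1, (Nat.succ_pred_eq_of_pos hd).symm⟩
  intro v w hv hw hvs hws
  set z : (Fin (n+1) → ℝ) → ℝ := fun y => w y - v y with hzdef
  have hzc : ContDiff ℝ (⊤ : ℕ∞) z := hw.sub hv
  have hzs : HasCompactSupport z := by
    apply HasCompactSupport.intro (hws.union hvs)
    intro x hx
    simp only [Set.mem_union] at hx
    push_neg at hx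
    have h1 : w x = 0 := image_eq_zero_of_notMem_tsupport hx.1
    have h2 : v x = 0 := image_eq_zero_of_notMem_tsupport hx.2
    simp [hzdef, h1, h2]
  -- continuity of the joint integrand
  have hentry : ∀ i j : Fin (n+1),
      Continuous fun p : (Fin (n+1) → ℝ) × 𝒜 × ℬ => a p.1 p.2.1 p.2.2 i j :=
    fun i j => (continuous_apply j).comp ((continuous_apply i).comp ha)
  have htrace : Continuous fun p : (Fin (n+1) → ℝ) × 𝒜 × ℬ =>
      Matrix.trace (a p.1 p.2.1 p.2.2) := by
    have heq : (fun p : (Fin (n+1) → ℝ) × 𝒜 × ℬ => Matrix.trace (a p.1 p.2.1 p.2.2))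
        = fun p => ∑ i, a p.1 p.2.1 p.2.2 i i := by
      funext p; simp [Matrix.trace, Matrix.diag]
    rw [heq]
    exact continuous_finset_sum _ fun i _ => hentry i i
  have hsq : Continuous fun p : (Fin (n+1) → ℝ) × 𝒜 × ℬ =>
      ∑ i, ∑ j, (a p.1 p.2.1 p.2.2 i j)^2 :=
    continuous_finset_sum _ fun i _ => continuous_finset_sum _ fun j _ => (hentry i j).pow 2
  have hsqne : ∀ p : (Fin (n+1) → ℝ) × 𝒜 × ℬ,
      (∑ i, ∑ j, (a p.1 p.2.1 p.2.2 i j)^2) ≠ 0 :=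
    fun p => (frob_pos _ (htr p.1 p.2.1 p.2.2)).ne'
  have hcdiv : Continuous fun p : (Fin (n+1) → ℝ) × 𝒜 × ℬ =>
      Matrix.trace (a p.1 p.2.1 p.2.2) / (∑ i, ∑ j, (a p.1 p.2.1 p.2.2 i j)^2) :=
    htrace.div hsq hsqne
  have hψcont : ∀ u : (Fin (n+1) → ℝ) → ℝ, ContDiff ℝ (⊤ : ℕ∞) u →
      Continuous fun p : (Fin (n+1) → ℝ) × 𝒜 × ℬ =>
        (Matrix.trace (a p.1 p.2.1 p.2.2) / (∑ i, ∑ j, (a p.1 p.2.1 p.2.2 i j) ^ 2)) *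
          ((∑ i, ∑ j, a p.1 p.2.1 p.2.2 i j * secondPartial u p.1 i j)
            - f p.1 p.2.1 p.2.2) := by
    intro u hu
    apply hcdiv.mul
    apply Continuous.sub _ hf
    apply continuous_finset_sum
    intro i _
    apply continuous_finset_sum
    intro j _
    exact (hentry i j).mul ((pd_continuous i (pd_contDiff j hu)).comp continuous_fst)
  have hFcont : ∀ u : (Fin (n+1) → ℝ) → ℝ, ContDiff ℝ (⊤ : ℕ∞) u → Continuous (Fγ u) := by
    intro u hu
    have heq : Fγ u = fun x => ⨅ α : 𝒜, ⨆ β : ℬ,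
        (fun (x : Fin (n+1) → ℝ) (α : 𝒜) (β : ℬ) =>
          (Matrix.trace (a x α β) / (∑ i, ∑ j, (a x α β i j) ^ 2)) *
            ((∑ i, ∑ j, a x α β i j * secondPartial u x i j) - f x α β)) x α β := by
      funext x; exact hFγ u x
    rw [heq]
    exact continuous_infsup _ (hψcont u hu)
  set T : (Fin (n+1) → ℝ) → ℝ := fun x => ∑ i, pd i (pd i z) x with hT
  set S2 : (Fin (n+1) → ℝ) → ℝ := fun x => ∑ i, ∑ j, (pd i (pd j z) x)^2 with hS2
  set K : (Fin (n+1) → ℝ) → ℝ := fun x => Real.sqrt (1 - ν) * Real.sqrt (S2 x) with hK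
  have hS2nn : ∀ x, 0 ≤ S2 x := fun x =>
    Finset.sum_nonneg fun _ _ => Finset.sum_nonneg fun _ _ => sq_nonneg _
  -- pointwise Cordes estimate
  have hpoint : ∀ x, |Fγ w x - Fγ v x - T x| ≤ K x := by
    intro x
    rw [hFγ w x, hFγ v x]
    obtain ⟨mh, Mh, hhb⟩ := exists_bounds
      (fun (α : 𝒜) (β : ℬ) =>
        (Matrix.trace (a x α β) / (∑ i, ∑ j, (a x α β i j) ^ 2)) *
          ((∑ i, ∑ j, a x α β i j * secondPartial w x i j) - f x α β))
      ((hψcont w hw).comp (continuous_const.prodMk continuous_id))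
    obtain ⟨mg, Mg, hgb⟩ := exists_bounds
      (fun (α : 𝒜) (β : ℬ) =>
        (Matrix.trace (a x α β) / (∑ i, ∑ j, (a x α β i j) ^ 2)) *
          ((∑ i, ∑ j, a x α β i j * secondPartial v x i j) - f x α β))
      ((hψcont v hv).comp (continuous_const.prodMk continuous_id))
    apply ciInf_ciSup_sandwich _ _ hhb hgb
    intro α β
    have hsp : ∀ i j, secondPartial w x i j - secondPartial v x i j = pd i (pd j z) x := by
      intro i j
      have h0 := pd2_sub hw hv i j x
      rw [← hzdef] at h0
      rw [h0]
      rfl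
    have hPQ : (∑ i, ∑ j, a x α β i j * secondPartial w x i j)
        - (∑ i, ∑ j, a x α β i j * secondPartial v x i j)
        = ∑ i, ∑ j, a x α β i j * pd i (pd j z) x := by
      rw [← Finset.sum_sub_distrib]
      refine Finset.sum_congr rfl fun i _ => ?_
      rw [← Finset.sum_sub_distrib]
      refine Finset.sum_congr rfl fun j _ => ?_
      rw [← mul_sub, hsp i j]
    have hcor := cordes_pointwise hd hν0 hν1 (a x α β) (htr x α β) (hcordes x α β)
      (Matrix.of fun i j => pd i (pd j z) x)
    simp only [Matrix.of_apply] at hcor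
    have hdiffeq :
        (Matrix.trace (a x α β) / (∑ i, ∑ j, (a x α β i j) ^ 2)) *
            ((∑ i, ∑ j, a x α β i j * secondPartial w x i j) - f x α β)
          - (Matrix.trace (a x α β) / (∑ i, ∑ j, (a x α β i j) ^ 2)) *
            ((∑ i, ∑ j, a x α β i j * secondPartial v x i j) - f x α β)
          - T x
        = (Matrix.trace (a x α β) / (∑ i, ∑ j, (a x α β i j) ^ 2)) *
            (∑ i, ∑ j, a x α β i j * pd i (pd j z) x)
          - ∑ i, pd i (pd i z) x := by
      rw [← hPQ]
      simp only [hT]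
      ring
    rw [hdiffeq]
    simp only [hK, hS2]
    exact hcor
  -- continuity and support of T, S2, K
  have hTc : Continuous T := by
    simp only [hT]
    exact continuous_finset_sum _ fun i _ => pd_continuous i (pd_contDiff i hzc)
  have hTcs : HasCompactSupport T := by
    apply hzs.mono'
    intro x hx
    by_contra hxt
    rw [Function.mem_support] at hx
    apply hx
    simp only [hT]
    exact Finset.sum_eq_zero fun i _ => pd2_zero_of_nmem i i hxt
  have hS2c : Continuous S2 := by
    simp only [hS2]
    exact continuous_finset_sum _ fun i _ => continuous_finset_sum _ fun j _ =>
      (pd_continuous i (pd_contDiff j hzc)).pow 2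
  have hS2cs : HasCompactSupport S2 := by
    apply hzs.mono'
    intro x hx
    by_contra hxt
    rw [Function.mem_support] at hx
    apply hx
    simp only [hS2]
    exact Finset.sum_eq_zero fun i _ => Finset.sum_eq_zero fun j _ => by
      rw [pd2_zero_of_nmem i j hxt]; ring
  have hKc : Continuous K := by
    simp only [hK]
    exact continuous_const.mul (Real.continuous_sqrt.comp hS2c)
  have hKcs : HasCompactSupport K := by
    apply hS2cs.mono'
    intro x hx
    apply subset_closure
    rw [Function.mem_support] at hx ⊢
    intro h0
    apply hx
    simp only [hK, h0, Real.sqrt_zero, mul_zero]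
  set G : (Fin (n+1) → ℝ) → ℝ := fun x => Fγ w x - Fγ v x with hG
  have hGc : Continuous G := (hFcont w hw).sub (hFcont v hv)
  -- integrability
  have int_T2 : Integrable (fun x => T x ^ 2) (volume : Measure (Fin (n+1) → ℝ)) := by
    apply cont_cs_integrable (hTc.pow 2)
    apply hTcs.mono'
    intro x hx
    apply subset_closure
    rw [Function.mem_support] at hx ⊢
    intro h0
    exact hx (by rw [Pi.pow_apply, h0]; ring)
  have int_S2 : Integrable S2 (volume : Measure (Fin (n+1) → ℝ)) :=
    cont_cs_integrable hS2c hS2cs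
  have int_KT : Integrable (fun x => K x * |T x|) (volume : Measure (Fin (n+1) → ℝ)) :=
    cont_cs_integrable (hKc.mul hTc.abs) hKcs.mul_right
  have hGT : ∀ x, |(G x - T x) * T x| ≤ K x * |T x| := by
    intro x
    rw [abs_mul]
    exact mul_le_mul_of_nonneg_right (hpoint x) (abs_nonneg _)
  have int_ET : Integrable (fun x => (G x - T x) * T x)
      (volume : Measure (Fin (n+1) → ℝ)) := by
    apply Integrable.mono' int_KT ((hGc.sub hTc).mul hTc).aestronglyMeasurable
    filter_upwards with x
    exact hGT x
  have hsplit : ∫ x : Fin (n+1) → ℝ, G x * T x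
      = (∫ x : Fin (n+1) → ℝ, (G x - T x) * T x) + ∫ x : Fin (n+1) → ℝ, T x ^ 2 := by
    rw [← integral_add int_ET int_T2]
    congr 1
    funext x
    ring
  have int_GT : Integrable (fun x => G x * T x) (volume : Measure (Fin (n+1) → ℝ)) := by
    have heq : (fun x : Fin (n+1) → ℝ => G x * T x)
        = fun x => (G x - T x) * T x + T x ^ 2 := by funext x; ring
    rw [heq]
    exact int_ET.add int_T2
  have hlow : -(∫ x : Fin (n+1) → ℝ, K x * |T x|)
      ≤ ∫ x : Fin (n+1) → ℝ, (G x - T x) * T x := by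
    rw [← integral_neg]
    apply integral_mono int_KT.neg int_ET
    intro x
    exact (abs_le.1 (hGT x)).1
  have hKTle : ∫ x : Fin (n+1) → ℝ, K x * |T x|
      ≤ Real.sqrt (1 - ν) * ∫ x : Fin (n+1) → ℝ, T x ^ 2 := by
    have hpt : ∀ x, K x * |T x| ≤ Real.sqrt (1 - ν) / 2 * (S2 x + T x ^ 2) := by
      intro x
      have h2ab := two_mul_le_add_sq (Real.sqrt (S2 x)) |T x|
      rw [Real.sq_sqrt (hS2nn x), sq_abs] at h2ab
      have hsnn : (0:ℝ) ≤ Real.sqrt (1 - ν) := Real.sqrt_nonneg _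
      have hmid : Real.sqrt (S2 x) * |T x| ≤ (S2 x + T x ^ 2) / 2 := by linarith
      calc K x * |T x| = Real.sqrt (1 - ν) * (Real.sqrt (S2 x) * |T x|) := by
            simp only [hK]; ring
        _ ≤ Real.sqrt (1 - ν) * ((S2 x + T x ^ 2) / 2) :=
            mul_le_mul_of_nonneg_left hmid hsnn
        _ = Real.sqrt (1 - ν) / 2 * (S2 x + T x ^ 2) := by ring
    have hmono := integral_mono int_KT
      ((int_S2.add int_T2).const_mul (Real.sqrt (1 - ν) / 2)) hpt
    rw [integral_const_mul] at hmono
    simp only [Pi.add_apply] at hmono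
    rw [integral_add int_S2 int_T2] at hmono
    have hmt : ∫ x : Fin (n+1) → ℝ, S2 x = ∫ x : Fin (n+1) → ℝ, T x ^ 2 := by
      simp only [hS2, hT]
      exact miranda_talenti hzc hzs
    rw [hmt] at hmono
    linarith
  have hfinal : (1 - Real.sqrt (1 - ν)) * ∫ x : Fin (n+1) → ℝ, T x ^ 2
      ≤ ∫ x : Fin (n+1) → ℝ, G x * T x := by
    rw [hsplit]
    have hT2nn : 0 ≤ ∫ x : Fin (n+1) → ℝ, T x ^ 2 :=
      integral_nonneg fun x => sq_nonneg _
    nlinarith [hlow, hKTle]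
  exact hfinal
end

section
/- Let H be a real Hilbert space and let A : H → H be Lipschitz continuous with constant L ≥ 0 and strongly monotone with constant c > 0. Let (V_k)_{k∈ℕ} be an increasing sequence of closed subspaces of H (V_k ⊆ V_{k+1}), and let V_∞ be the closure of their union. For each k, let u_k ∈ V_k satisfy ⟪A u_k, v⟫ = 0 for all v ∈ V_k, and let u_∞ ∈ V_∞ satisfy ⟪A u_∞, v⟫ = 0 for all v ∈ V_∞. Then ‖u_∞ − u_k‖ ≤ (L/c)·dist(u_∞, V_k) for every k, and consequently ‖u_∞ − u_k‖ → 0 as k → ∞. -/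
/-!
Subtracting the two Galerkin equations gives `⟪A u_∞ - A u_k, v⟫ = 0` for `v ∈ V_k`, so for any
`v ∈ V_k` strong monotonicity, this orthogonality and the Lipschitz bound give
`c ‖u_∞ - u_k‖² ≤ ⟪A u_∞ - A u_k, u_∞ - v⟫ ≤ L ‖u_∞ - u_k‖ ‖u_∞ - v‖` (Céa's lemma).
Since `u_∞` lies in the closure of the increasing union of the `V_k`, `dist(u_∞, V_k) → 0`.
-/

open Filter Metric Topology

lemma le_mul_infDist_of_forall_le_mul_dist {α : Type*} [PseudoMetricSpace α] {x : α}
    {s : Set α} (hs : s.Nonempty) {a L : ℝ} (hL : 0 ≤ L) (h : ∀ y ∈ s, a ≤ L * dist x y) :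
    a ≤ L * infDist x s := by
  have : Nonempty s := hs.to_subtype
  rw [infDist_eq_iInf, Real.mul_iInf_of_nonneg hL]
  exact le_ciInf fun y => h y y.2

lemma tendsto_infDist_of_mem_closure_iUnion {α ι : Type*} [PseudoMetricSpace α] [Preorder ι]
    {s : ι → Set α} (hs : Monotone s) {x : α} (hx : x ∈ closure (⋃ i, s i)) :
    Tendsto (fun i => infDist x (s i)) atTop (𝓝 0) := by
  refine tendsto_order.2 ⟨fun a ha => .of_forall fun i => ha.trans_le infDist_nonneg,
    fun ε hε => ?_⟩
  obtain ⟨y, hy, hxy⟩ := mem_closure_iff.1 hx ε hε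
  obtain ⟨m, hm⟩ := Set.mem_iUnion.1 hy
  filter_upwards [eventually_ge_atTop m] with i hi
  exact (infDist_le_dist_of_mem (hs hi hm)).trans_lt hxy

section Cea

variable {H : Type*} [NormedAddCommGroup H] [InnerProductSpace ℝ H] {A : H → H} {L c : ℝ}

lemma mul_norm_sub_le_mul_norm_sub_of_inner_eq_zero (hL : 0 ≤ L)
    (hlip : ∀ u v : H, ‖A u - A v‖ ≤ L * ‖u - v‖)
    (hmono : ∀ u v : H, c * ‖u - v‖ ^ 2 ≤ (inner ℝ (A u - A v) (u - v) : ℝ))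
    {U : Submodule ℝ H} {u w : H} (hu : u ∈ U)
    (horth : ∀ v ∈ U, (inner ℝ (A w - A u) v : ℝ) = 0) {v : H} (hv : v ∈ U) :
    c * ‖w - u‖ ≤ L * ‖w - v‖ := by
  have hsq : c * ‖w - u‖ ^ 2 ≤ L * ‖w - v‖ * ‖w - u‖ :=
    calc c * ‖w - u‖ ^ 2 ≤ inner ℝ (A w - A u) (w - u) := hmono w u
      _ = inner ℝ (A w - A u) (w - v) := by
        rw [← sub_add_sub_cancel w v u, inner_add_right, horth _ (U.sub_mem hv hu), add_zero]
      _ ≤ ‖A w - A u‖ * ‖w - v‖ := real_inner_le_norm _ _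
      _ ≤ L * ‖w - u‖ * ‖w - v‖ := by gcongr; exact hlip w u
      _ = L * ‖w - v‖ * ‖w - u‖ := by ring
  rcases (norm_nonneg (w - u)).eq_or_lt with hzero | hpos
  · rw [← hzero, mul_zero]
    positivity
  · rw [sq, ← mul_assoc] at hsq
    exact le_of_mul_le_mul_right hsq hpos

lemma norm_sub_le_div_mul_infDist_of_inner_eq_zero (hL : 0 ≤ L) (hc : 0 < c)
    (hlip : ∀ u v : H, ‖A u - A v‖ ≤ L * ‖u - v‖)
    (hmono : ∀ u v : H, c * ‖u - v‖ ^ 2 ≤ (inner ℝ (A u - A v) (u - v) : ℝ))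
    {U : Submodule ℝ H} {u w : H} (hu : u ∈ U)
    (horth : ∀ v ∈ U, (inner ℝ (A w - A u) v : ℝ) = 0) :
    ‖w - u‖ ≤ L / c * infDist w U := by
  have hcea : c * ‖w - u‖ ≤ L * infDist w U :=
    le_mul_infDist_of_forall_le_mul_dist ⟨0, U.zero_mem⟩ hL fun v hv => by
      rw [dist_eq_norm]
      exact mul_norm_sub_le_mul_norm_sub_of_inner_eq_zero hL hlip hmono hu horth hv
  rw [div_mul_eq_mul_div, le_div_iff₀ hc, mul_comm]
  exact hcea

end Cea

theorem galerkin_convergence_increasing_subspaces_general {H : Type*} [NormedAddCommGroup H]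
    [InnerProductSpace ℝ H]
    (A : H → H) (L : ℝ) (hL : 0 ≤ L)
    (hlip : ∀ u v : H, ‖A u - A v‖ ≤ L * ‖u - v‖)
    (c : ℝ) (hc : 0 < c)
    (hmono : ∀ u v : H, c * ‖u - v‖ ^ 2 ≤ (inner ℝ (A u - A v) (u - v) : ℝ))
    (V : ℕ → Submodule ℝ H)
    (hVmono : ∀ k, V k ≤ V (k + 1))
    (Vinf : Submodule ℝ H) (hVinf : (Vinf : Set H) = closure (⋃ k, (V k : Set H)))
    (u : ℕ → H) (hu : ∀ k, u k ∈ V k)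
    (hugal : ∀ k, ∀ v ∈ V k, (inner ℝ (A (u k)) v : ℝ) = 0)
    (uinf : H) (huinf : uinf ∈ Vinf)
    (huinfgal : ∀ v ∈ Vinf, (inner ℝ (A uinf) v : ℝ) = 0) :
    (∀ k, ‖uinf - u k‖ ≤ (L / c) * Metric.infDist uinf (V k : Set H)) ∧
    Filter.Tendsto (fun k => ‖uinf - u k‖) Filter.atTop (nhds 0) := by
  have hVle : ∀ k, V k ≤ Vinf := fun k => by
    rw [← SetLike.coe_subset_coe, hVinf]
    exact (Set.subset_iUnion (fun k => (V k : Set H)) k).trans subset_closure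
  have hbound : ∀ k, ‖uinf - u k‖ ≤ L / c * infDist uinf (V k : Set H) := fun k =>
    norm_sub_le_div_mul_infDist_of_inner_eq_zero hL hc hlip hmono (hu k) fun v hv => by
      rw [inner_sub_left, huinfgal v (hVle k hv), hugal k v hv, sub_zero]
  have hdist : Tendsto (fun k => infDist uinf (V k : Set H)) atTop (𝓝 0) :=
    tendsto_infDist_of_mem_closure_iUnion
      (SetLike.coe_mono.comp (monotone_nat_of_le_succ hVmono)) (hVinf ▸ huinf)
  refine ⟨hbound, squeeze_zero (fun _ => norm_nonneg _) hbound ?_⟩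
  simpa using hdist.const_mul (L / c)

/-- **Convergence of Galerkin solutions over an increasing family of subspaces
(abstract core of Lemma 5.3).** Let `H` be a real Hilbert space, `A : H → H` Lipschitz
with constant `L ≥ 0` and strongly monotone with constant `c > 0`. Let `(V_k)` be an
increasing sequence of closed subspaces, `V_∞` the closure of their union, `u_k ∈ V_k`
the Galerkin solutions and `u_∞ ∈ V_∞` the solution of the limit problem. Then
`‖u_∞ − u_k‖ ≤ (L/c)·dist(u_∞, V_k)` for every `k`, and `‖u_∞ − u_k‖ → 0`. -/
theorem galerkin_convergence_increasing_subspaces {H : Type*} [NormedAddCommGroup H]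
    [InnerProductSpace ℝ H] [CompleteSpace H]
    (A : H → H) (L : ℝ) (hL : 0 ≤ L)
    (hlip : ∀ u v : H, ‖A u - A v‖ ≤ L * ‖u - v‖)
    (c : ℝ) (hc : 0 < c)
    (hmono : ∀ u v : H, c * ‖u - v‖ ^ 2 ≤ (inner ℝ (A u - A v) (u - v) : ℝ))
    (V : ℕ → Submodule ℝ H) (hVclosed : ∀ k, IsClosed ((V k : Set H)))
    (hVmono : ∀ k, V k ≤ V (k + 1))
    (Vinf : Submodule ℝ H) (hVinf : (Vinf : Set H) = closure (⋃ k, (V k : Set H)))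
    (u : ℕ → H) (hu : ∀ k, u k ∈ V k)
    (hugal : ∀ k, ∀ v ∈ V k, (inner ℝ (A (u k)) v : ℝ) = 0)
    (uinf : H) (huinf : uinf ∈ Vinf)
    (huinfgal : ∀ v ∈ Vinf, (inner ℝ (A uinf) v : ℝ) = 0) :
    (∀ k, ‖uinf - u k‖ ≤ (L / c) * Metric.infDist uinf (V k : Set H)) ∧
    Filter.Tendsto (fun k => ‖uinf - u k‖) Filter.atTop (nhds 0) :=
  galerkin_convergence_increasing_subspaces_general A L hL hlip c hc hmono V hVmono Vinf hVinf u hu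
    hugal uinf huinf huinfgal
end

section
/- Let (X, Σ, μ) be a measurable space with a finite measure, let θ ∈ (0,1), and let (P_k)_{k∈ℕ} be a nested sequence of finite measurable partitions of X that is θ-shrinking: every cell of P_{k+1} that is a proper subset of a cell S of P_k has measure at most θ·μ(S). Let P⁺ := ⋃_{m} ⋂_{k≥m} P_k be the collection of never-refined cells. Then: (i) max{μ(S) : S ∈ P_k, S ∉ P⁺} → 0 as k → ∞ (with the maximum over the empty collection taken to be 0); and (ii) μ(Ω⁺ \ Ω_k⁺) → 0 as k → ∞, where Ω⁺ := ⋃{S : S ∈ P⁺} and Ω_k⁺ := ⋃{S : S ∈ P_k ∩ P⁺}. -/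
open MeasureTheory

section Aux

variable {X : Type*} [MeasurableSpace X] (μ : Measure X) (P : ℕ → Set (Set X))

lemma aux_eq_of_subset (hpos : ∀ k, ∀ S ∈ P k, 0 < μ S)
    (hdisj : ∀ k, ∀ S ∈ P k, ∀ T ∈ P k, S ≠ T → Disjoint S T)
    {k : ℕ} {S T : Set X} (hS : S ∈ P k) (hT : T ∈ P k) (hST : S ⊆ T) : S = T := by
  by_contra h
  have hd := Set.disjoint_iff_inter_eq_empty.mp (hdisj k S hS T hT h)
  rw [Set.inter_eq_self_of_subset_left hST] at hd
  have := hpos k S hS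
  simp [hd] at this

lemma aux_anc (hnested : ∀ k, ∀ S' ∈ P (k + 1), ∃ S ∈ P k, S' ⊆ S) :
    ∀ n k, ∀ S ∈ P (k + n), ∃ T ∈ P k, S ⊆ T := by
  intro n
  induction n with
  | zero => exact fun k S hS => ⟨S, hS, subset_rfl⟩
  | succ n ih =>
    intro k S hS
    obtain ⟨B, hB, hSB⟩ := hnested (k + n) S hS
    obtain ⟨T, hT, hBT⟩ := ih k B hB
    exact ⟨T, hT, hSB.trans hBT⟩

lemma aux_anc' (hnested : ∀ k, ∀ S' ∈ P (k + 1), ∃ S ∈ P k, S' ⊆ S)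
    {j k : ℕ} (hjk : j ≤ k) {S : Set X} (hS : S ∈ P k) : ∃ T ∈ P j, S ⊆ T := by
  obtain ⟨n, rfl⟩ := Nat.exists_eq_add_of_le hjk
  exact aux_anc P hnested n j S hS

lemma aux_interval (hpos : ∀ k, ∀ S ∈ P k, 0 < μ S)
    (hdisj : ∀ k, ∀ S ∈ P k, ∀ T ∈ P k, S ≠ T → Disjoint S T)
    (hnested : ∀ k, ∀ S' ∈ P (k + 1), ∃ S ∈ P k, S' ⊆ S)
    {j l m : ℕ} (hjl : j ≤ l) (hlm : l ≤ m) {S : Set X}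
    (hSj : S ∈ P j) (hSm : S ∈ P m) : S ∈ P l := by
  obtain ⟨T, hT, hST⟩ := aux_anc' P hnested hlm hSm
  obtain ⟨T', hT', hTT'⟩ := aux_anc' P hnested hjl hT
  have h1 : S = T' := aux_eq_of_subset μ P hpos hdisj hSj hT' (hST.trans hTT')
  have h2 : T = S := subset_antisymm (by rw [h1]; exact hTT') hST
  rwa [← h2]

lemma aux_persist (hpos : ∀ k, ∀ S ∈ P k, 0 < μ S)
    (hdisj : ∀ k, ∀ S ∈ P k, ∀ T ∈ P k, S ≠ T → Disjoint S T)
    (hnested : ∀ k, ∀ S' ∈ P (k + 1), ∃ S ∈ P k, S' ⊆ S)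
    {k : ℕ} {S : Set X} (hS : S ∈ P k) (hpl : ∃ m, ∀ l, m ≤ l → S ∈ P l) :
    ∀ l, k ≤ l → S ∈ P l := by
  obtain ⟨m, hm⟩ := hpl
  intro l hkl
  rcases le_total m l with h | h
  · exact hm l h
  · exact aux_interval μ P hpos hdisj hnested hkl h hS (hm m le_rfl)

lemma aux_exit (hpos : ∀ k, ∀ S ∈ P k, 0 < μ S)
    (hdisj : ∀ k, ∀ S ∈ P k, ∀ T ∈ P k, S ≠ T → Disjoint S T)
    (hnested : ∀ k, ∀ S' ∈ P (k + 1), ∃ S ∈ P k, S' ⊆ S)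
    {k : ℕ} {S : Set X} (hS : S ∈ P k) (hnp : ¬ ∃ m, ∀ l, m ≤ l → S ∈ P l) :
    ∃ e, ∀ l, e ≤ l → S ∉ P l := by
  push_neg at hnp
  obtain ⟨l, hkl, hSl⟩ := hnp k
  refine ⟨l, fun l' hll' hSl' => hSl ?_⟩
  exact aux_interval μ P hpos hdisj hnested hkl hll' hS hSl'

/-- If `S ∈ P k` is a proper subset of an ancestor `T ∈ P j`, some proper refinement
step happens at a time `i ≥ j`. -/
lemma aux_split (hpos : ∀ k, ∀ S ∈ P k, 0 < μ S)
    (hdisj : ∀ k, ∀ S ∈ P k, ∀ T ∈ P k, S ≠ T → Disjoint S T)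
    (hnested : ∀ k, ∀ S' ∈ P (k + 1), ∃ S ∈ P k, S' ⊆ S) :
    ∀ k j, j ≤ k → ∀ S ∈ P k, ∀ T ∈ P j, S ⊆ T → S ≠ T →
      ∃ i, j ≤ i ∧ ∃ A ∈ P i, ∃ A' ∈ P (i + 1), S ⊆ A' ∧ A' ⊆ A ∧ A' ≠ A := by
  intro k
  induction k with
  | zero =>
    intro j hj S hS T hT hsub hne
    interval_cases j
    exact absurd (aux_eq_of_subset μ P hpos hdisj hS hT hsub) hne
  | succ k ih =>
    intro j hj S hS T hT hsub hne
    rcases eq_or_lt_of_le hj with rfl | hlt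
    · exact absurd (aux_eq_of_subset μ P hpos hdisj hS hT hsub) hne
    · have hjk : j ≤ k := Nat.lt_succ_iff.mp hlt
      obtain ⟨B, hB, hSB⟩ := hnested k S hS
      by_cases hSeqB : S = B
      · obtain ⟨i, hi, A, hA, A', hA', h1, h2, h3⟩ :=
          ih j hjk B hB T hT (hSeqB ▸ hsub) (hSeqB ▸ hne)
        exact ⟨i, hi, A, hA, A', hA', hSeqB ▸ h1, h2, h3⟩
      · exact ⟨k, hjk, B, hB, S, hS, subset_rfl, hSB, hSeqB⟩

lemma aux_Q [IsFiniteMeasure μ] {θ : ℝ}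
    (hfin : ∀ k, (P k).Finite)
    (hpos : ∀ k, ∀ S ∈ P k, 0 < μ S)
    (hdisj : ∀ k, ∀ S ∈ P k, ∀ T ∈ P k, S ≠ T → Disjoint S T)
    (hnested : ∀ k, ∀ S' ∈ P (k + 1), ∃ S ∈ P k, S' ⊆ S)
    (hshrink : ∀ k, ∀ S' ∈ P (k + 1), ∀ S ∈ P k, S' ⊆ S → S' ≠ S →
      μ S' ≤ ENNReal.ofReal θ * μ S) :
    ∀ N : ℕ, ∃ K : ℕ, ∀ k, K ≤ k → ∀ S ∈ P k, (¬ ∃ m, ∀ l, m ≤ l → S ∈ P l) →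
      μ S ≤ (ENNReal.ofReal θ) ^ N * μ Set.univ := by
  intro N
  induction N with
  | zero =>
    exact ⟨0, fun k _ S _ _ => by simpa using measure_mono (Set.subset_univ S)⟩
  | succ N ihN =>
    obtain ⟨K, hK⟩ := ihN
    -- exit times for non-persistent cells of P K
    have hex : ∀ S : Set X, ∃ e : ℕ, S ∈ P K → (¬ ∃ m, ∀ l, m ≤ l → S ∈ P l) →
        ∀ l, e ≤ l → S ∉ P l := by
      intro S
      by_cases h1 : S ∈ P K
      · by_cases h2 : ∃ m, ∀ l, m ≤ l → S ∈ P l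
        · exact ⟨0, fun _ h => absurd h2 h⟩
        · obtain ⟨e, he⟩ := aux_exit μ P hpos hdisj hnested h1 h2
          exact ⟨e, fun _ _ => he⟩
      · exact ⟨0, fun h => absurd h h1⟩
    choose e he using hex
    refine ⟨max (K + 1) ((hfin K).toFinset.sup e), fun k hk S hS hSnp => ?_⟩
    have hKk : K ≤ k := le_trans (Nat.le_succ K) (le_trans (le_max_left _ _) hk)
    -- ancestor in P K
    obtain ⟨T, hT, hST⟩ := aux_anc' P hnested hKk hS
    have hTnp : ¬ ∃ m, ∀ l, m ≤ l → T ∈ P l := by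
      intro hTpl
      have hTk : T ∈ P k := aux_persist μ P hpos hdisj hnested hT hTpl k hKk
      have : S = T := aux_eq_of_subset μ P hpos hdisj hS hTk hST
      exact hSnp (this ▸ hTpl)
    have hTout : T ∉ P k := by
      apply he T hT hTnp
      exact le_trans (le_trans (Finset.le_sup ((hfin K).mem_toFinset.mpr hT))
        (le_max_right _ _)) hk
    have hSneT : S ≠ T := fun h => hTout (h ▸ hS)
    obtain ⟨i, hKi, A, hA, A', hA', hSA', hA'A, hA'ne⟩ :=
      aux_split μ P hpos hdisj hnested k K hKk S hS T hT hST hSneT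
    have hAnp : ¬ ∃ m, ∀ l, m ≤ l → A ∈ P l := by
      intro hApl
      have : A ∈ P (i + 1) :=
        aux_persist μ P hpos hdisj hnested hA hApl (i + 1) (Nat.le_succ i)
      exact hA'ne (aux_eq_of_subset μ P hpos hdisj hA' this hA'A)
    calc μ S ≤ μ A' := measure_mono hSA'
      _ ≤ ENNReal.ofReal θ * μ A := hshrink i A' hA' A hA hA'A hA'ne
      _ ≤ ENNReal.ofReal θ * ((ENNReal.ofReal θ) ^ N * μ Set.univ) :=
          mul_le_mul_right (hK i hKi A hA hAnp) _
      _ = (ENNReal.ofReal θ) ^ (N + 1) * μ Set.univ := by ring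

end Aux

/-- **Uniformly vanishing cell size on the refined region and exhaustion of the
never-refined region (measure-theoretic abstraction of Lemma 4.3).** Let `μ` be a finite
measure on `X`, `θ ∈ (0,1)`, and `(P_k)` a nested sequence of finite measurable partitions
of `X` that is `θ`-shrinking: every cell of `P_{k+1}` that is a proper subset of a cell `S`
of `P_k` has measure at most `θ·μ(S)`. With `P⁺ := ⋃_m ⋂_{k≥m} P_k` the never-refined
cells, `Ω⁺ := ⋃ P⁺` and `Ω_k⁺ := ⋃ (P_k ∩ P⁺)`, we have
(i) `max{μ(S) : S ∈ P_k, S ∉ P⁺} → 0` (max over the empty collection being `0`), and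
(ii) `μ(Ω⁺ \ Ω_k⁺) → 0` as `k → ∞`. -/
theorem shrinking_partitions_refined_region_vanishes {X : Type*} [MeasurableSpace X]
    (μ : Measure X) [IsFiniteMeasure μ] (θ : ℝ) (hθ0 : 0 < θ) (hθ1 : θ < 1)
    (P : ℕ → Set (Set X))
    (hfin : ∀ k, (P k).Finite)
    (hmeas : ∀ k, ∀ S ∈ P k, MeasurableSet S)
    (hpos : ∀ k, ∀ S ∈ P k, 0 < μ S)
    (hdisj : ∀ k, ∀ S ∈ P k, ∀ T ∈ P k, S ≠ T → Disjoint S T)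
    (hcover : ∀ k, ⋃₀ (P k) = Set.univ)
    (hnested : ∀ k, ∀ S' ∈ P (k + 1), ∃ S ∈ P k, S' ⊆ S)
    (hshrink : ∀ k, ∀ S' ∈ P (k + 1), ∀ S ∈ P k, S' ⊆ S → S' ≠ S →
      μ S' ≤ ENNReal.ofReal θ * μ S) :
    Filter.Tendsto
        (fun k => ⨆ S ∈ {T | T ∈ P k ∧ T ∉ {U : Set X | ∃ m, ∀ l, m ≤ l → U ∈ P l}}, μ S)
        Filter.atTop (nhds 0) ∧
    Filter.Tendsto
        (fun k => μ ((⋃₀ {U : Set X | ∃ m, ∀ l, m ≤ l → U ∈ P l}) \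
          ⋃₀ (P k ∩ {U : Set X | ∃ m, ∀ l, m ≤ l → U ∈ P l})))
        Filter.atTop (nhds 0) := by
  constructor
  · -- part (i)
    rw [ENNReal.tendsto_nhds_zero]
    intro ε hε
    have hθlt : ENNReal.ofReal θ < 1 := by
      rw [← ENNReal.ofReal_one]
      exact ENNReal.ofReal_lt_ofReal_iff_of_nonneg hθ0.le |>.mpr hθ1
    have h1 : Filter.Tendsto (fun N : ℕ => (ENNReal.ofReal θ) ^ N * μ Set.univ)
        Filter.atTop (nhds 0) := by
      have := ENNReal.Tendsto.mul_const
        (ENNReal.tendsto_pow_atTop_nhds_zero_of_lt_one hθlt)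
        (Or.inr (measure_ne_top μ Set.univ))
      simpa using this
    obtain ⟨N, hN⟩ := (h1.eventually_le_const hε).exists
    obtain ⟨K, hK⟩ := aux_Q μ P hfin hpos hdisj hnested hshrink N
    filter_upwards [Filter.eventually_ge_atTop K] with k hk
    refine iSup₂_le fun S hS => ?_
    exact le_trans (hK k hk S hS.1 hS.2) hN
  · -- part (ii)
    set Pp : Set (Set X) := {U : Set X | ∃ m, ∀ l, m ≤ l → U ∈ P l} with hPp
    set Ω : ℕ → Set X := fun k => ⋃₀ (P k ∩ Pp) with hΩ
    have hmono : Monotone Ω := by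
      apply monotone_nat_of_le_succ
      intro k
      apply Set.sUnion_mono
      rintro U ⟨hU1, hU2⟩
      exact ⟨aux_persist μ P hpos hdisj hnested hU1 hU2 (k + 1) (Nat.le_succ k), hU2⟩
    have hunion : ⋃ k, Ω k = ⋃₀ Pp := by
      apply subset_antisymm
      · exact Set.iUnion_subset fun k => Set.sUnion_mono Set.inter_subset_right
      · rintro x ⟨U, hU, hxU⟩
        obtain ⟨m, hm⟩ := hU
        exact Set.mem_iUnion.mpr ⟨m, U, ⟨hm m le_rfl, ⟨m, hm⟩⟩, hxU⟩
    have hΩmeas : ∀ k, MeasurableSet (Ω k) := by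
      intro k
      apply MeasurableSet.sUnion ((hfin k).subset Set.inter_subset_left).countable
      exact fun S hS => hmeas k S hS.1
    have hsub : ∀ k, Ω k ⊆ ⋃₀ Pp := fun k => hunion ▸ Set.subset_iUnion Ω k
    have hlim : Filter.Tendsto (fun k => μ (Ω k)) Filter.atTop (nhds (μ (⋃₀ Pp))) := by
      rw [← hunion]
      exact tendsto_measure_iUnion_atTop hmono
    have heq : ∀ k, μ (⋃₀ Pp \ Ω k) = μ (⋃₀ Pp) - μ (Ω k) := fun k =>
      measure_diff (hsub k) (hΩmeas k).nullMeasurableSet (measure_ne_top μ _)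
    have hptop : μ (⋃₀ Pp) ≠ ⊤ := measure_ne_top μ _
    have := ENNReal.Tendsto.sub (tendsto_const_nhds (x := μ (⋃₀ Pp))) hlim (Or.inl hptop)
    rw [tsub_self] at this
    exact this.congr fun k => (heq k).symm
end

section
/- Let X be a set and let (P_k)_{k∈ℕ} be a sequence of finite collections of nonempty subsets of X such that, for each k, the cells of P_k are pairwise disjoint and cover X, and every cell of P_{k+1} is contained in some cell of P_k. Let P⁺ := ⋃_{m} ⋂_{k≥m} P_k. Then: (i) if a set S belongs to both P_k and P_m with k ≤ m, then S belongs to P_l for every l with k ≤ l ≤ m; and (ii) for every k there exists M = M(k) such that P_k ∩ P_m = P_k ∩ P⁺ for all m ≥ M. -/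
/-- **Stabilization of never-refined cells (element-level abstraction of Lemma 4.4).**
Let `(P_k)` be a sequence of finite collections of nonempty, pairwise disjoint subsets of
`X` covering `X`, with every cell of `P_{k+1}` contained in some cell of `P_k`. With
`P⁺ := ⋃_m ⋂_{k≥m} P_k` the collection of never-refined cells, we have:
(i) if `S ∈ P_k` and `S ∈ P_m` with `k ≤ m`, then `S ∈ P_l` for all `k ≤ l ≤ m`; and
(ii) for every `k` there is `M` such that `P_k ∩ P_m = P_k ∩ P⁺` for all `m ≥ M`. -/
theorem never_refined_cells_stabilize {X : Type*} (P : ℕ → Set (Set X))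
    (hfin : ∀ k, (P k).Finite)
    (hne : ∀ k, ∀ S ∈ P k, S.Nonempty)
    (hdisj : ∀ k, ∀ S ∈ P k, ∀ T ∈ P k, S ≠ T → Disjoint S T)
    (hcover : ∀ k, ⋃₀ (P k) = Set.univ)
    (hnested : ∀ k, ∀ S' ∈ P (k + 1), ∃ S ∈ P k, S' ⊆ S) :
    (∀ S : Set X, ∀ k m : ℕ, k ≤ m → S ∈ P k → S ∈ P m →
      ∀ l, k ≤ l → l ≤ m → S ∈ P l) ∧
    (∀ k : ℕ, ∃ M : ℕ, ∀ m, M ≤ m →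
      P k ∩ P m = P k ∩ {U : Set X | ∃ n, ∀ l, n ≤ l → U ∈ P l}) := by
  classical
  -- Any cell of a later mesh is contained in some cell of an earlier mesh.
  have hA : ∀ l m : ℕ, l ≤ m → ∀ S ∈ P m, ∃ T ∈ P l, S ⊆ T := by
    intro l m hlm
    induction m, hlm using Nat.le_induction with
    | base => intro S hS; exact ⟨S, hS, subset_rfl⟩
    | succ m hm ih =>
      intro S hS
      obtain ⟨T, hT, hST⟩ := hnested m S hS
      obtain ⟨U, hU, hTU⟩ := ih T hT
      exact ⟨U, hU, hST.trans hTU⟩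
  -- Within one mesh, inclusion of cells implies equality.
  have heq : ∀ k : ℕ, ∀ S ∈ P k, ∀ U ∈ P k, S ⊆ U → S = U := by
    intro k S hS U hU hSU
    by_contra h
    obtain ⟨x, hx⟩ := hne k S hS
    exact (Set.disjoint_left.mp (hdisj k S hS U hU h) hx) (hSU hx)
  -- Part (i)
  have hi : ∀ S : Set X, ∀ k m : ℕ, k ≤ m → S ∈ P k → S ∈ P m →
      ∀ l, k ≤ l → l ≤ m → S ∈ P l := by
    intro S k m hkm hSk hSm l hkl hlm
    obtain ⟨T, hT, hST⟩ := hA l m hlm S hSm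
    obtain ⟨U, hU, hTU⟩ := hA k l hkl T hT
    have hSU : S = U := heq k S hSk U hU (hST.trans hTU)
    have hST' : S = T := subset_antisymm hST (by rw [hSU]; exact hTU)
    rw [hST']; exact hT
  refine ⟨hi, ?_⟩
  intro k
  -- Each cell of `P k` that is not never-refined eventually disappears.
  have hdis : ∀ S ∈ P k, (¬ ∃ n, ∀ l, n ≤ l → S ∈ P l) →
      ∃ M, ∀ m, M ≤ m → S ∉ P m := by
    intro S hSk hnot
    by_contra h
    push_neg at h
    refine hnot ⟨k, fun l hkl => ?_⟩
    obtain ⟨m, hlm, hSm⟩ := h l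
    exact hi S k m (hkl.trans hlm) hSk hSm l hkl hlm
  -- Take the max of the disappearance times over the finite mesh `P k`.
  set f : Set X → ℕ := fun S =>
    if h : ∃ M, ∀ m, M ≤ m → S ∉ P m then h.choose else 0 with hf
  set M : ℕ := k ⊔ (hfin k).toFinset.sup f with hM
  refine ⟨M, fun m hMm => ?_⟩
  have hkm : k ≤ m := le_trans le_sup_left hMm
  ext S
  simp only [Set.mem_inter_iff, Set.mem_setOf_eq]
  constructor
  · rintro ⟨hSk, hSm⟩
    refine ⟨hSk, ?_⟩
    by_contra hnot
    obtain ⟨M', hM'⟩ := hdis S hSk hnot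
    have hex : ∃ M, ∀ m, M ≤ m → S ∉ P m := ⟨M', hM'⟩
    have hfS : ∀ n, f S ≤ n → S ∉ P n := by
      intro n hn
      have := hex.choose_spec
      apply this
      simpa [hf, hex] using hn
    have hfle : f S ≤ m := by
      refine le_trans ?_ hMm
      refine le_trans ?_ le_sup_right
      exact Finset.le_sup ((hfin k).mem_toFinset.mpr hSk)
    exact hfS m hfle hSm
  · rintro ⟨hSk, n, hn⟩
    refine ⟨hSk, ?_⟩
    rcases le_total n m with h | h
    · exact hn m h
    · exact hi S k n (hkm.trans h) hSk (hn n le_rfl) m hkm h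
end
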